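/- arXiv:2004.07402 — 13 statements merged into one kernel-verified Lean document; each statement's English description precedes it below -/
import Mathlib

section
/- Let S, I, Q, R, B : ℝ → ℝ be differentiable functions satisfying the SIQRB system for all t ≥ 0, with κ + B(t) > 0 for all t ≥ 0 and nonnegative initial data S(0) ≥ 0, I(0) ≥ 0, Q(0) ≥ 0, R(0) ≥ 0, B(0) ≥ 0. Then S(t) ≥ 0, I(t) ≥ 0, Q(t) ≥ 0, R(t) ≥ 0 and B(t) ≥ 0 for all t ≥ 0. -/
/-!
On `[0, T]` bound `|S|, |B| ≤ M` and `κ + B ≥ c > 0`. If every compartment is `≥ -e` and one of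
them equals `-e`, the right-hand side of that compartment's equation is `≥ -K e` with
`K = (β + ρ) M / c + ω + δ + ε + η`; the only nonlinear term, `B S / (κ + B)`, then has size at
most `M e / c`. So the perturbed solution `x + σ e^{(K + 1)(u - t)}` starts positive and no
compartment can reach zero first, since its derivative there would be positive. Letting `σ → 0`
gives nonnegativity.
-/

open Set Filter Topology

theorem HasDerivAt.eventually_nhdsLT_lt {f : ℝ → ℝ} {f' x : ℝ} (hf : HasDerivAt f f' x)
    (hf' : 0 < f') : ∀ᶠ y in 𝓝[<] x, f y < f x := by
  filter_upwards [nhdsLT_le_nhdsNE x ((hasDerivAt_iff_tendsto_slope.mp hf).eventually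
    (eventually_gt_nhds hf')), self_mem_nhdsWithin] with y hy (hyx : y < x)
  exact (slope_pos_iff_gt hyx).mp hy

theorem forall_pos_of_deriv_pos_of_eq_zero {ι : Type*} [Finite ι] {x x' : ι → ℝ → ℝ} {a b : ℝ}
    (hx : ∀ i, ∀ t ∈ Icc a b, HasDerivAt (x i) (x' i t) t) (ha : ∀ i, 0 < x i a)
    (hzero : ∀ t ∈ Ioc a b, ∀ i, (∀ j, 0 ≤ x j t) → x i t = 0 → 0 < x' i t) :
    ∀ t ∈ Icc a b, ∀ i, 0 < x i t := by
  by_contra! hbad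
  set bad := ⋃ i, Icc a b ∩ x i ⁻¹' Iic 0
  have hclosed : IsClosed bad := isClosed_iUnion_of_finite fun i =>
    ContinuousOn.preimage_isClosed_of_isClosed
      (fun t ht => (hx i t ht).continuousAt.continuousWithinAt) isClosed_Icc isClosed_Iic
  have hne : bad.Nonempty := by
    obtain ⟨t, ht, i, hi⟩ := hbad
    exact ⟨t, mem_iUnion.2 ⟨i, ht, hi⟩⟩
  obtain ⟨t₀, ht₀bad, hleast⟩ := (isCompact_Icc.of_isClosed_subset hclosed
    (iUnion_subset fun i => inter_subset_left)).exists_isLeast hne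
  obtain ⟨i, ht₀, hi⟩ := mem_iUnion.1 ht₀bad
  have ht₀a : a < t₀ := ht₀.1.lt_of_ne (by rintro rfl; exact (ha i).not_ge hi)
  have hbefore : ∀ j, ∀ᶠ u in 𝓝[<] t₀, 0 < x j u := fun j => by
    filter_upwards [Ioo_mem_nhdsLT ht₀a] with u hu
    by_contra! h
    exact (hleast (mem_iUnion.2 ⟨j, ⟨hu.1.le, hu.2.le.trans ht₀.2⟩, h⟩)).not_gt hu.2
  have hnonneg : ∀ j, 0 ≤ x j t₀ := fun j =>
    ge_of_tendsto ((hx j t₀ ht₀).continuousAt.tendsto.mono_left nhdsWithin_le_nhds)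
      ((hbefore j).mono fun _ => le_of_lt)
  have hxi : x i t₀ = 0 := le_antisymm hi (hnonneg i)
  obtain ⟨u, hpos, hlt⟩ := ((hbefore i).and ((hx i t₀ ht₀).eventually_nhdsLT_lt
    (hzero t₀ ⟨ht₀a, ht₀.2⟩ i hnonneg hxi))).exists
  exact (hpos.trans hlt).ne' hxi

theorem forall_nonneg_of_deriv_ge_neg_mul {ι : Type*} [Finite ι] {x x' : ι → ℝ → ℝ} {a b K : ℝ}
    (hx : ∀ i, ∀ t ∈ Icc a b, HasDerivAt (x i) (x' i t) t) (ha : ∀ i, 0 ≤ x i a)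
    (hK : ∀ t ∈ Ioc a b, ∀ e > 0, ∀ i, (∀ j, -e ≤ x j t) → x i t = -e → -(K * e) ≤ x' i t) :
    ∀ t ∈ Icc a b, ∀ i, 0 ≤ x i t := by
  intro t ht i
  refine le_of_forall_pos_lt_add fun σ hσ => ?_
  -- the rate `K + 1` makes the perturbed derivative at a first zero strictly positive
  set E : ℝ → ℝ := fun u => σ * Real.exp ((K + 1) * (u - t))
  have hE : ∀ u, HasDerivAt E (E u * (K + 1)) u := fun u => by
    simpa [E, mul_assoc] using
      ((((hasDerivAt_id u).sub_const t).const_mul (K + 1)).exp).const_mul σ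
  have hEpos : ∀ u, 0 < E u := fun u => by positivity
  have hpert := forall_pos_of_deriv_pos_of_eq_zero (x := fun j u => x j u + E u)
    (fun j u hu => (hx j u hu).add (hE u)) (fun j => add_pos_of_nonneg_of_pos (ha j) (hEpos a))
    (fun u hu j hnonneg hzero => by
      have := hK u hu (E u) (hEpos u) j (fun k => neg_le_iff_add_nonneg.2 (hnonneg k))
        (eq_neg_of_add_eq_zero_left hzero)
      linarith [hEpos u])
  simpa [E] using hpert t ht i

noncomputable def siqrbField (Λ β κ ω μ δ ε η d ρ α₁ α₂ s i q r b : ℝ) : Fin 5 → ℝ :=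
  ![Λ - β * b * s / (κ + b) + ω * r - μ * s,
    β * b * s / (κ + b) - (δ + α₁ + μ) * i,
    δ * i - (ε + α₂ + μ) * q,
    ε * q - (ω + μ) * r,
    η * i - d * b - ρ * b * s / (κ + b)]

theorem neg_mul_le_mul_of_neg_le {a b e M : ℝ} (he : 0 ≤ e) (hM : 0 ≤ M) (ha : -e ≤ a)
    (hb : -e ≤ b) (haM : a ≤ M) (hbM : b ≤ M) : -(M * e) ≤ a * b := by
  rcases le_total 0 a with ha0 | ha0 <;> rcases le_total 0 b with hb0 | hb0 <;> nlinarith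

theorem siqrbField_ge_neg_mul {Λ β κ ω μ δ ε η d ρ α₁ α₂ M c e s i q r b : ℝ}
    (hΛ : 0 ≤ Λ) (hβ : 0 ≤ β) (hω : 0 ≤ ω) (hμ : 0 ≤ μ) (hδ : 0 ≤ δ) (hε : 0 ≤ ε)
    (hη : 0 ≤ η) (hd : 0 ≤ d) (hρ : 0 ≤ ρ) (hα₁ : 0 ≤ α₁) (hα₂ : 0 ≤ α₂)
    (he : 0 ≤ e) (hsM : |s| ≤ M) (hbM : |b| ≤ M) (hc : 0 < c) (hcb : c ≤ κ + b)
    (hge : ∀ j, -e ≤ ![s, i, q, r, b] j) {j : Fin 5} (hj : ![s, i, q, r, b] j = -e) :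
    -(((β + ρ) * M / c + ω + δ + ε + η) * e) ≤
      siqrbField Λ β κ ω μ δ ε η d ρ α₁ α₂ s i q r b j := by
  obtain ⟨hs, hi, hq, hr, hb⟩ : -e ≤ s ∧ -e ≤ i ∧ -e ≤ q ∧ -e ≤ r ∧ -e ≤ b :=
    ⟨hge 0, hge 1, hge 2, hge 3, hge 4⟩
  obtain ⟨hs₁, hs₂⟩ := abs_le.1 hsM
  obtain ⟨hb₁, hb₂⟩ := abs_le.1 hbM
  have hM : 0 ≤ M := (abs_nonneg s).trans hsM
  have hMe : 0 ≤ M * e := mul_nonneg hM he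
  have hratio_le (h : b * s ≤ M * e) : b * s / (κ + b) ≤ M * e / c := div_le_div₀ hMe h hc hcb
  have hratio_ge : -(M * e / c) ≤ b * s / (κ + b) := by
    rw [neg_le, ← neg_div]
    exact div_le_div₀ hMe (neg_le.1 (neg_mul_le_mul_of_neg_le he hM hb hs hb₂ hs₂)) hc hcb
  have hK : ((β + ρ) * M / c + ω + δ + ε + η) * e =
      β * (M * e / c) + ρ * (M * e / c) + ω * e + δ * e + ε * e + η * e := by ring
  have hβMe : 0 ≤ β * (M * e / c) := by positivity
  have hρMe : 0 ≤ ρ * (M * e / c) := by positivity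
  have hωe : 0 ≤ ω * e := mul_nonneg hω he
  have hδe : 0 ≤ δ * e := mul_nonneg hδ he
  have hεe : 0 ≤ ε * e := mul_nonneg hε he
  have hηe : 0 ≤ η * e := mul_nonneg hη he
  have hμe : 0 ≤ μ * e := mul_nonneg hμ he
  fin_cases j <;>
    simp only [siqrbField, Fin.zero_eta, Fin.mk_one, Fin.reduceFinMk, Matrix.cons_val] at hj ⊢
  · have hbs := mul_le_mul_of_nonneg_left (hratio_le (by rw [hj]; nlinarith)) hβ
    have hωr := mul_le_mul_of_nonneg_left hr hω
    have hβbs : β * b * s / (κ + b) = β * (b * s / (κ + b)) := by ring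
    have hμs : μ * s = -(μ * e) := by rw [hj]; ring
    linarith
  · have hbs := mul_le_mul_of_nonneg_left hratio_ge hβ
    have hβbs : β * b * s / (κ + b) = β * (b * s / (κ + b)) := by ring
    have hi' : (δ + α₁ + μ) * i = -((δ + α₁ + μ) * e) := by rw [hj]; ring
    have : 0 ≤ (δ + α₁ + μ) * e := by positivity
    linarith
  · have hδi := mul_le_mul_of_nonneg_left hi hδ
    have hq' : (ε + α₂ + μ) * q = -((ε + α₂ + μ) * e) := by rw [hj]; ring
    have : 0 ≤ (ε + α₂ + μ) * e := by positivity
    linarith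
  · have hεq := mul_le_mul_of_nonneg_left hq hε
    have hr' : (ω + μ) * r = -((ω + μ) * e) := by rw [hj]; ring
    have : 0 ≤ (ω + μ) * e := by positivity
    linarith
  · have hbs := mul_le_mul_of_nonneg_left (hratio_le (by rw [hj]; nlinarith)) hρ
    have hηi := mul_le_mul_of_nonneg_left hi hη
    have hρbs : ρ * b * s / (κ + b) = ρ * (b * s / (κ + b)) := by ring
    have hdb : d * b = -(d * e) := by rw [hj]; ring
    have : 0 ≤ d * e := by positivity
    linarith

theorem siqrb_nonneg_general
    (Λ β κ ω μ δ ε η d ρ α₁ α₂ : ℝ)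
    (hΛ : 0 < Λ) (hβ : 0 < β) (hω : 0 < ω) (hμ : 0 < μ)
    (hδ : 0 < δ) (hε : 0 < ε) (hη : 0 < η) (hd : 0 < d) (hρ : 0 < ρ)
    (hα₁ : 0 ≤ α₁) (hα₂ : 0 ≤ α₂)
    (S I Q R B : ℝ → ℝ)
    (hS : ∀ t, 0 ≤ t →
      HasDerivAt S (Λ - β * B t * S t / (κ + B t) + ω * R t - μ * S t) t)
    (hI : ∀ t, 0 ≤ t →
      HasDerivAt I (β * B t * S t / (κ + B t) - (δ + α₁ + μ) * I t) t)
    (hQ : ∀ t, 0 ≤ t →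
      HasDerivAt Q (δ * I t - (ε + α₂ + μ) * Q t) t)
    (hR : ∀ t, 0 ≤ t →
      HasDerivAt R (ε * Q t - (ω + μ) * R t) t)
    (hB : ∀ t, 0 ≤ t →
      HasDerivAt B (η * I t - d * B t - ρ * B t * S t / (κ + B t)) t)
    (hκB : ∀ t, 0 ≤ t → 0 < κ + B t)
    (hS0 : 0 ≤ S 0) (hI0 : 0 ≤ I 0) (hQ0 : 0 ≤ Q 0) (hR0 : 0 ≤ R 0)
    (hB0 : 0 ≤ B 0) :
    ∀ t, 0 ≤ t → 0 ≤ S t ∧ 0 ≤ I t ∧ 0 ≤ Q t ∧ 0 ≤ R t ∧ 0 ≤ B t := by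
  intro T hT
  have hSc : ContinuousOn S (Icc 0 T) := fun t ht => (hS t ht.1).continuousAt.continuousWithinAt
  have hBc : ContinuousOn B (Icc 0 T) := fun t ht => (hB t ht.1).continuousAt.continuousWithinAt
  obtain ⟨MS, hMS⟩ := isCompact_Icc.exists_bound_of_continuousOn hSc
  obtain ⟨MB, hMB⟩ := isCompact_Icc.exists_bound_of_continuousOn hBc
  obtain ⟨tmin, htmin, hmin⟩ :=
    isCompact_Icc.exists_isMinOn (nonempty_Icc.2 hT) (continuousOn_const.add hBc)
  have hnonneg := forall_nonneg_of_deriv_ge_neg_mul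
    (x := fun j t => ![S t, I t, Q t, R t, B t] j)
    (x' := fun j t => siqrbField Λ β κ ω μ δ ε η d ρ α₁ α₂ (S t) (I t) (Q t) (R t) (B t) j)
    (fun j t ht => by
      fin_cases j
      exacts [hS t ht.1, hI t ht.1, hQ t ht.1, hR t ht.1, hB t ht.1])
    (fun j => by fin_cases j <;> assumption)
    (fun t ht e he j hge hj => siqrbField_ge_neg_mul hΛ.le hβ.le hω.le hμ.le hδ.le hε.le hη.le
      hd.le hρ.le hα₁ hα₂ he.le ((hMS t (Ioc_subset_Icc_self ht)).trans (le_max_left MS MB))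
      ((hMB t (Ioc_subset_Icc_self ht)).trans (le_max_right MS MB)) (hκB tmin htmin.1)
      (hmin (Ioc_subset_Icc_self ht)) hge hj)
  have hT' : T ∈ Icc 0 T := ⟨hT, le_rfl⟩
  exact ⟨hnonneg T hT' 0, hnonneg T hT' 1, hnonneg T hT' 2, hnonneg T hT' 3, hnonneg T hT' 4⟩

/-- Nonnegativity of solutions of the SIQRB cholera model. -/
theorem siqrb_nonneg
    (Λ β κ ω μ δ ε η d ρ α₁ α₂ : ℝ)
    (hΛ : 0 < Λ) (hβ : 0 < β) (hκ : 0 < κ) (hω : 0 < ω) (hμ : 0 < μ)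
    (hδ : 0 < δ) (hε : 0 < ε) (hη : 0 < η) (hd : 0 < d) (hρ : 0 < ρ)
    (hα₁ : 0 ≤ α₁) (hα₂ : 0 ≤ α₂)
    (S I Q R B : ℝ → ℝ)
    (hS : ∀ t, 0 ≤ t →
      HasDerivAt S (Λ - β * B t * S t / (κ + B t) + ω * R t - μ * S t) t)
    (hI : ∀ t, 0 ≤ t →
      HasDerivAt I (β * B t * S t / (κ + B t) - (δ + α₁ + μ) * I t) t)
    (hQ : ∀ t, 0 ≤ t →
      HasDerivAt Q (δ * I t - (ε + α₂ + μ) * Q t) t)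
    (hR : ∀ t, 0 ≤ t →
      HasDerivAt R (ε * Q t - (ω + μ) * R t) t)
    (hB : ∀ t, 0 ≤ t →
      HasDerivAt B (η * I t - d * B t - ρ * B t * S t / (κ + B t)) t)
    (hκB : ∀ t, 0 ≤ t → 0 < κ + B t)
    (hS0 : 0 ≤ S 0) (hI0 : 0 ≤ I 0) (hQ0 : 0 ≤ Q 0) (hR0 : 0 ≤ R 0)
    (hB0 : 0 ≤ B 0) :
    ∀ t, 0 ≤ t → 0 ≤ S t ∧ 0 ≤ I t ∧ 0 ≤ Q t ∧ 0 ≤ R t ∧ 0 ≤ B t :=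
  siqrb_nonneg_general Λ β κ ω μ δ ε η d ρ α₁ α₂ hΛ hβ hω hμ hδ hε hη hd hρ hα₁ hα₂ S I Q R B hS hI
    hQ hR hB hκB hS0 hI0 hQ0 hR0 hB0
end

section
/- Let S, I, Q, R, B : ℝ → ℝ be differentiable functions satisfying the SIQRB system for all t ≥ 0, with κ + B(t) > 0, S(t) ≥ 0, I(t) ≥ 0, Q(t) ≥ 0, R(t) ≥ 0 and B(t) ≥ 0 for all t ≥ 0. If S(0) + I(0) + Q(0) + R(0) ≤ Λ/μ, then S(t) + I(t) + Q(t) + R(t) ≤ Λ/μ for all t ≥ 0. -/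
/-! The total population `N = S + I + Q + R` satisfies
`N' = Λ - μ N - α₁ I - α₂ Q ≤ Λ - μ N`. With the integrating factor `e^{μ t}`,
the quantity `(N t - Λ / μ) e^{μ t}` is therefore nonincreasing; it starts
nonpositive, so it stays so. -/

open Real Set

theorem le_div_of_hasDerivAt_le_sub_mul {N N' : ℝ → ℝ} {Λ μ a : ℝ} (hμ : μ ≠ 0)
    (hN : ∀ t, a ≤ t → HasDerivAt N (N' t) t)
    (hN' : ∀ t, a ≤ t → N' t ≤ Λ - μ * N t)
    (ha : N a ≤ Λ / μ) {t : ℝ} (ht : a ≤ t) : N t ≤ Λ / μ := by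
  set g : ℝ → ℝ := fun s => (N s - Λ / μ) * exp (μ * s)
  set g' : ℝ → ℝ := fun s => (N' s - (Λ - μ * N s)) * exp (μ * s)
  have hg : ∀ s, a ≤ s → HasDerivAt g (g' s) s := by
    intro s hs
    have hexp : HasDerivAt (fun s => exp (μ * s)) (exp (μ * s) * μ) s :=
      ((hasDerivAt_id s).const_mul μ).exp.congr_deriv (by simp)
    refine (((hN s hs).sub_const (Λ / μ)).mul hexp).congr_deriv ?_
    field_simp
    ring
  have hanti : AntitoneOn g (Ici a) := by
    refine antitoneOn_of_hasDerivWithinAt_nonpos (f' := g') (convex_Ici a)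
      (fun s hs => (hg s hs).continuousAt.continuousWithinAt) (fun s hs => ?_) (fun s hs => ?_)
    all_goals rw [interior_Ici] at hs
    · exact (hg s hs.le).hasDerivWithinAt
    · exact mul_nonpos_of_nonpos_of_nonneg (sub_nonpos.2 (hN' s hs.le)) (exp_pos _).le
  have hga : g a ≤ 0 := mul_nonpos_of_nonpos_of_nonneg (sub_nonpos.2 ha) (exp_pos _).le
  have hgt : g t ≤ 0 := (hanti self_mem_Ici ht ht).trans hga
  exact sub_nonpos.1 (nonpos_of_mul_nonpos_left hgt (exp_pos _))

theorem siqrb_population_bounded_general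
    (Λ β κ ω μ δ ε α₁ α₂ : ℝ)
    (hμ : 0 < μ)
    (hα₁ : 0 ≤ α₁) (hα₂ : 0 ≤ α₂)
    (S I Q R B : ℝ → ℝ)
    (hS : ∀ t, 0 ≤ t →
      HasDerivAt S (Λ - β * B t * S t / (κ + B t) + ω * R t - μ * S t) t)
    (hI : ∀ t, 0 ≤ t →
      HasDerivAt I (β * B t * S t / (κ + B t) - (δ + α₁ + μ) * I t) t)
    (hQ : ∀ t, 0 ≤ t →
      HasDerivAt Q (δ * I t - (ε + α₂ + μ) * Q t) t)
    (hR : ∀ t, 0 ≤ t →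
      HasDerivAt R (ε * Q t - (ω + μ) * R t) t)
    (hInn : ∀ t, 0 ≤ t → 0 ≤ I t)
    (hQnn : ∀ t, 0 ≤ t → 0 ≤ Q t)
    (hN0 : S 0 + I 0 + Q 0 + R 0 ≤ Λ / μ) :
    ∀ t, 0 ≤ t → S t + I t + Q t + R t ≤ Λ / μ := by
  have hN : ∀ t, 0 ≤ t → HasDerivAt (fun t => S t + I t + Q t + R t)
      (Λ - μ * (S t + I t + Q t + R t) - α₁ * I t - α₂ * Q t) t := fun t ht =>
    ((((hS t ht).add (hI t ht)).add (hQ t ht)).add (hR t ht)).congr_deriv (by ring)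
  have hN' : ∀ t, 0 ≤ t → Λ - μ * (S t + I t + Q t + R t) - α₁ * I t - α₂ * Q t ≤
      Λ - μ * (S t + I t + Q t + R t) := fun t ht => by
    nlinarith [mul_nonneg hα₁ (hInn t ht), mul_nonneg hα₂ (hQnn t ht)]
  exact fun t ht => le_div_of_hasDerivAt_le_sub_mul hμ.ne' hN hN' hN0 ht

/-- Boundedness of the total human population in the SIQRB model. -/
theorem siqrb_population_bounded
    (Λ β κ ω μ δ ε η d ρ α₁ α₂ : ℝ)
    (hΛ : 0 < Λ) (hβ : 0 < β) (hκ : 0 < κ) (hω : 0 < ω) (hμ : 0 < μ)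
    (hδ : 0 < δ) (hε : 0 < ε) (hη : 0 < η) (hd : 0 < d) (hρ : 0 < ρ)
    (hα₁ : 0 ≤ α₁) (hα₂ : 0 ≤ α₂)
    (S I Q R B : ℝ → ℝ)
    (hS : ∀ t, 0 ≤ t →
      HasDerivAt S (Λ - β * B t * S t / (κ + B t) + ω * R t - μ * S t) t)
    (hI : ∀ t, 0 ≤ t →
      HasDerivAt I (β * B t * S t / (κ + B t) - (δ + α₁ + μ) * I t) t)
    (hQ : ∀ t, 0 ≤ t →
      HasDerivAt Q (δ * I t - (ε + α₂ + μ) * Q t) t)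
    (hR : ∀ t, 0 ≤ t →
      HasDerivAt R (ε * Q t - (ω + μ) * R t) t)
    (hB : ∀ t, 0 ≤ t →
      HasDerivAt B (η * I t - d * B t - ρ * B t * S t / (κ + B t)) t)
    (hκB : ∀ t, 0 ≤ t → 0 < κ + B t)
    (hSnn : ∀ t, 0 ≤ t → 0 ≤ S t) (hInn : ∀ t, 0 ≤ t → 0 ≤ I t)
    (hQnn : ∀ t, 0 ≤ t → 0 ≤ Q t) (hRnn : ∀ t, 0 ≤ t → 0 ≤ R t)
    (hBnn : ∀ t, 0 ≤ t → 0 ≤ B t)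
    (hN0 : S 0 + I 0 + Q 0 + R 0 ≤ Λ / μ) :
    ∀ t, 0 ≤ t → S t + I t + Q t + R t ≤ Λ / μ :=
  siqrb_population_bounded_general Λ β κ ω μ δ ε α₁ α₂ hμ hα₁ hα₂ S I Q R B hS hI hQ hR hInn hQnn
    hN0
end

section
/- Let S, I, B : ℝ → ℝ with B differentiable and satisfying B'(t) = ηI(t) − dB(t) − ρB(t)S(t)/(κ + B(t)) for all t ≥ 0, where κ + B(t) > 0, S(t) ≥ 0, B(t) ≥ 0 and 0 ≤ I(t) ≤ Λ/μ for all t ≥ 0. If B(0) ≤ Λη/(μd), then B(t) ≤ Λη/(μd) for all t ≥ 0. -/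
open Real Set

/-- The weight `exp (d t)` turns `f' ≤ d (M - f)` into `((f - M) exp (d t))' ≤ 0`. -/
theorem le_of_hasDerivAt_le_mul_sub {f f' : ℝ → ℝ} {d M : ℝ}
    (hf : ∀ t, 0 ≤ t → HasDerivAt f (f' t) t) (hf' : ∀ t, 0 < t → f' t ≤ d * (M - f t))
    (h0 : f 0 ≤ M) : ∀ t, 0 ≤ t → f t ≤ M := by
  set g : ℝ → ℝ := fun t => (f t - M) * exp (d * t)
  have hg : ∀ t, 0 ≤ t → HasDerivAt g ((f' t + d * (f t - M)) * exp (d * t)) t := fun t ht => by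
    refine (((hf t ht).sub_const M).mul (((hasDerivAt_id t).const_mul d).exp)).congr_deriv ?_
    simp only [id, mul_one]
    ring
  have hanti : AntitoneOn g (Ici 0) := by
    refine antitoneOn_of_hasDerivWithinAt_nonpos (convex_Ici 0)
      (f' := fun t => (f' t + d * (f t - M)) * exp (d * t))
      (fun t ht => (hg t ht).continuousAt.continuousWithinAt) (fun t ht => ?_) (fun t ht => ?_)
      <;> rw [interior_Ici] at ht
    · exact (hg t ht.le).hasDerivWithinAt
    · have := hf' t ht
      exact mul_nonpos_of_nonpos_of_nonneg (by linarith) (exp_nonneg _)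
  intro t ht
  have hg0 : g 0 ≤ 0 := by simpa [g] using h0
  have hgt : g t ≤ 0 := (hanti self_mem_Ici ht ht).trans hg0
  exact sub_nonpos.1 (nonpos_of_mul_nonpos_left hgt (exp_pos _))

theorem bacteria_rate_le_mul_sub {Λ κ μ η d ρ I B S : ℝ} (hη : 0 ≤ η) (hd : d ≠ 0) (hρ : 0 ≤ ρ)
    (hκB : 0 < κ + B) (hS : 0 ≤ S) (hB : 0 ≤ B) (hI : I ≤ Λ / μ) :
    η * I - d * B - ρ * B * S / (κ + B) ≤ d * (Λ * η / (μ * d) - B) := by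
  have hloss : 0 ≤ ρ * B * S / (κ + B) := by positivity
  have hgain : η * I ≤ d * (Λ * η / (μ * d)) := calc
    η * I ≤ η * (Λ / μ) := mul_le_mul_of_nonneg_left hI hη
    _ = d * (Λ * η / (μ * d)) := by field_simp
  linarith

theorem siqrb_bacteria_bounded_general
    (Λ κ μ η d ρ : ℝ)
    (hη : 0 < η) (hd : 0 < d) (hρ : 0 < ρ)
    (S I B : ℝ → ℝ)
    (hB : ∀ t, 0 ≤ t →
      HasDerivAt B (η * I t - d * B t - ρ * B t * S t / (κ + B t)) t)
    (hκB : ∀ t, 0 ≤ t → 0 < κ + B t)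
    (hSnn : ∀ t, 0 ≤ t → 0 ≤ S t)
    (hBnn : ∀ t, 0 ≤ t → 0 ≤ B t)
    (hIub : ∀ t, 0 ≤ t → I t ≤ Λ / μ)
    (hB0 : B 0 ≤ Λ * η / (μ * d)) :
    ∀ t, 0 ≤ t → B t ≤ Λ * η / (μ * d) :=
  le_of_hasDerivAt_le_mul_sub hB (fun t ht => bacteria_rate_le_mul_sub hη.le hd.ne' hρ.le
    (hκB t ht.le) (hSnn t ht.le) (hBnn t ht.le) (hIub t ht.le)) hB0

/-- Boundedness of the bacterial concentration in the SIQRB model. -/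
theorem siqrb_bacteria_bounded
    (Λ β κ ω μ δ ε η d ρ α₁ α₂ : ℝ)
    (hΛ : 0 < Λ) (hβ : 0 < β) (hκ : 0 < κ) (hω : 0 < ω) (hμ : 0 < μ)
    (hδ : 0 < δ) (hε : 0 < ε) (hη : 0 < η) (hd : 0 < d) (hρ : 0 < ρ)
    (hα₁ : 0 ≤ α₁) (hα₂ : 0 ≤ α₂)
    (S I B : ℝ → ℝ)
    (hB : ∀ t, 0 ≤ t →
      HasDerivAt B (η * I t - d * B t - ρ * B t * S t / (κ + B t)) t)
    (hκB : ∀ t, 0 ≤ t → 0 < κ + B t)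
    (hSnn : ∀ t, 0 ≤ t → 0 ≤ S t)
    (hBnn : ∀ t, 0 ≤ t → 0 ≤ B t)
    (hInn : ∀ t, 0 ≤ t → 0 ≤ I t)
    (hIub : ∀ t, 0 ≤ t → I t ≤ Λ / μ)
    (hB0 : B 0 ≤ Λ * η / (μ * d)) :
    ∀ t, 0 ≤ t → B t ≤ Λ * η / (μ * d) :=
  siqrb_bacteria_bounded_general Λ κ μ η d ρ hη hd hρ S I B hB hκB hSnn hBnn hIub hB0
end

section
/- If R₀ < 1, then every complex root χ of the characteristic polynomial of the 5×5 real matrix J₀ (equivalently, every complex eigenvalue of J₀) has negative real part, Re χ < 0. -/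
/-!
Expanding along the first row, the characteristic polynomial of `J₀` factors as
`(χ + μ)(χ + a₃)(χ + a₂)((χ + a₁)(χ + c) - bη)` with `b = βΛ/(μκ)` and `c = d + ρΛ/(μκ)`.
The three linear factors have negative roots. The quadratic `χ² + (a₁ + c)χ + (a₁c - bη)` has
positive coefficients, because `μκ (a₁c - bη) = a₁(μκd + ρΛ) - βΛη` is positive exactly when
`R₀ < 1`, and a real quadratic with positive coefficients has both roots in the open left half-plane.
-/

/-- The Jacobian of the SIQRB system at the disease-free equilibrium. -/
noncomputable def J₀ (Λ β κ ω μ δ ε η d ρ α₁ α₂ : ℝ) : Matrix (Fin 5) (Fin 5) ℝ :=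
  Matrix.of
    ![![-μ, 0, 0, ω, -(β * Λ / (μ * κ))],
      ![0, -(δ + α₁ + μ), 0, 0, β * Λ / (μ * κ)],
      ![0, δ, -(ε + α₂ + μ), 0, 0],
      ![0, 0, ε, -(ω + μ), 0],
      ![0, η, 0, 0, -d - ρ * Λ / (μ * κ)]]

open Complex

theorem re_neg_of_add_ofReal_eq_zero {r : ℝ} (hr : 0 < r) {z : ℂ} (hz : z + r = 0) :
    z.re < 0 := by
  have hre := congrArg re hz
  rw [add_re, ofReal_re, zero_re] at hre
  linarith

theorem re_neg_of_sq_add_mul_add_eq_zero {p q : ℝ} (hp : 0 < p) (hq : 0 < q) {z : ℂ}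
    (hz : z ^ 2 + p * z + q = 0) : z.re < 0 := by
  have hre := congrArg re hz
  have him := congrArg im hz
  simp only [pow_two, add_re, add_im, mul_re, mul_im, ofReal_re, ofReal_im, zero_re,
    zero_im] at hre him
  by_contra! hx
  have him' : z.im * (2 * z.re + p) = 0 := by linarith
  rcases mul_eq_zero.mp him' with hy | hy
  · rw [hy] at hre
    nlinarith
  · linarith

theorem mul_add_div_sub_div_mul_pos_iff {k : ℝ} (hk : 0 < k) (a b c r η : ℝ) :
    0 < a * (c + r / k) - b / k * η ↔ b * η < a * (k * c + r) := by
  have hk' : k ≠ 0 := hk.ne'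
  have key : a * (c + r / k) - b / k * η = (a * (k * c + r) - b * η) / k := by
    field_simp
  rw [key, div_pos_iff_of_pos_right hk, sub_pos]

set_option maxRecDepth 8000 in
theorem det_smul_one_sub_map_J₀ (Λ β κ ω μ δ ε η d ρ α₁ α₂ : ℝ) (χ : ℂ) :
    (χ • (1 : Matrix (Fin 5) (Fin 5) ℂ) -
        (J₀ Λ β κ ω μ δ ε η d ρ α₁ α₂).map (fun x => (x : ℂ))).det =
      (χ + μ) * (χ + (ω + μ : ℝ)) * (χ + (ε + α₂ + μ : ℝ)) *
        (χ ^ 2 + ((δ + α₁ + μ) + (d + ρ * Λ / (μ * κ)) : ℝ) * χ +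
          ((δ + α₁ + μ) * (d + ρ * Λ / (μ * κ)) - β * Λ / (μ * κ) * η : ℝ)) := by
  simp [J₀, Matrix.det_succ_row_zero, Fin.sum_univ_succ, Matrix.one_apply, Fin.succAbove]
  ring

theorem J0_eigenvalues_neg_re_of_R0_lt_one_general
    (Λ β κ ω μ δ ε η d ρ α₁ α₂ : ℝ)
    (hΛ : 0 < Λ) (hκ : 0 < κ) (hω : 0 < ω) (hμ : 0 < μ)
    (hδ : 0 < δ) (hε : 0 < ε) (hd : 0 < d) (hρ : 0 < ρ)
    (hα₁ : 0 ≤ α₁) (hα₂ : 0 ≤ α₂)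
    (a₁ R₀ : ℝ) (ha₁ : a₁ = δ + α₁ + μ)
    (hR₀ : R₀ = β * Λ * η / (a₁ * (μ * κ * d + ρ * Λ)))
    (hlt : R₀ < 1) :
    ∀ χ : ℂ,
      (χ • (1 : Matrix (Fin 5) (Fin 5) ℂ) -
        (J₀ Λ β κ ω μ δ ε η d ρ α₁ α₂).map (fun x => (x : ℂ))).det = 0 →
      χ.re < 0 := by
  intro χ hχ
  subst ha₁ hR₀
  rw [det_smul_one_sub_map_J₀, mul_eq_zero, mul_eq_zero, mul_eq_zero] at hχ
  have hμκ : 0 < μ * κ := by positivity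
  have hconst := (mul_add_div_sub_div_mul_pos_iff hμκ (δ + α₁ + μ) (β * Λ) d (ρ * Λ) η).2
    ((div_lt_one (by positivity)).1 hlt)
  rcases hχ with ((hS | hR) | hQ) | hIB
  · exact re_neg_of_add_ofReal_eq_zero hμ hS
  · exact re_neg_of_add_ofReal_eq_zero (by positivity) hR
  · exact re_neg_of_add_ofReal_eq_zero (by positivity) hQ
  · exact re_neg_of_sq_add_mul_add_eq_zero (by positivity) hconst hIB

/-- if R₀ < 1, every complex eigenvalue of J₀ has negative real part. -/
theorem J0_eigenvalues_neg_re_of_R0_lt_one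
    (Λ β κ ω μ δ ε η d ρ α₁ α₂ : ℝ)
    (hΛ : 0 < Λ) (hβ : 0 < β) (hκ : 0 < κ) (hω : 0 < ω) (hμ : 0 < μ)
    (hδ : 0 < δ) (hε : 0 < ε) (hη : 0 < η) (hd : 0 < d) (hρ : 0 < ρ)
    (hα₁ : 0 ≤ α₁) (hα₂ : 0 ≤ α₂)
    (a₁ R₀ : ℝ) (ha₁ : a₁ = δ + α₁ + μ)
    (hR₀ : R₀ = β * Λ * η / (a₁ * (μ * κ * d + ρ * Λ)))
    (hlt : R₀ < 1) :
    ∀ χ : ℂ,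
      (χ • (1 : Matrix (Fin 5) (Fin 5) ℂ) -
        (J₀ Λ β κ ω μ δ ε η d ρ α₁ α₂).map (fun x => (x : ℂ))).det = 0 →
      χ.re < 0 :=
  J0_eigenvalues_neg_re_of_R0_lt_one_general Λ β κ ω μ δ ε η d ρ α₁ α₂ hΛ hκ hω hμ hδ hε hd hρ hα₁
    hα₂ a₁ R₀ ha₁ hR₀ hlt
end

section
/- If R₀ > 1, then the 5×5 real matrix J₀ has a real eigenvalue χ > 0; consequently the disease-free equilibrium is linearly unstable. -/
/-- Explicit root from the quadratic formula; the condition `a * b < c` makes the discriminant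
exceed `(a + b) ^ 2`. -/
theorem exists_pos_add_mul_add_eq_of_mul_lt {a b c : ℝ} (h : a * b < c) :
    ∃ x : ℝ, 0 < x ∧ (x + a) * (x + b) = c := by
  set s := √((a - b) ^ 2 + 4 * c)
  have hdisc : 0 ≤ (a - b) ^ 2 + 4 * c := by nlinarith [sq_nonneg (a + b)]
  have hs : s ^ 2 = (a - b) ^ 2 + 4 * c := Real.sq_sqrt hdisc
  have hlt : a + b < s :=
    (le_abs_self _).trans_lt <| Real.lt_sqrt (abs_nonneg _) |>.mpr <| by
      rw [sq_abs]; linarith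
  exact ⟨(s - (a + b)) / 2, by linarith, by linear_combination hs / 4⟩

theorem det_smul_one_sub_J₀ (Λ β κ ω μ δ ε η d ρ α₁ α₂ χ : ℝ) :
    (χ • (1 : Matrix (Fin 5) (Fin 5) ℝ) - J₀ Λ β κ ω μ δ ε η d ρ α₁ α₂).det =
      (χ + μ) * (χ + (ε + α₂ + μ)) * (χ + (ω + μ)) *
        ((χ + (δ + α₁ + μ)) * (χ + (d + ρ * Λ / (μ * κ))) - β * Λ / (μ * κ) * η) := by
  simp [J₀, Matrix.det_succ_column_zero, Fin.sum_univ_succ, Matrix.one_apply, Fin.succAbove]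
  ring

theorem J0_has_positive_eigenvalue_of_R0_gt_one_general
    (Λ β κ ω μ δ ε η d ρ α₁ α₂ : ℝ)
    (hΛ : 0 < Λ) (hκ : 0 < κ) (hμ : 0 < μ)
    (hδ : 0 < δ) (hd : 0 < d) (hρ : 0 < ρ)
    (hα₁ : 0 ≤ α₁)
    (a₁ R₀ : ℝ) (ha₁ : a₁ = δ + α₁ + μ)
    (hR₀ : R₀ = β * Λ * η / (a₁ * (μ * κ * d + ρ * Λ)))
    (hgt : 1 < R₀) :
    ∃ χ : ℝ, 0 < χ ∧
      (χ • (1 : Matrix (Fin 5) (Fin 5) ℝ) - J₀ Λ β κ ω μ δ ε η d ρ α₁ α₂).det = 0 := by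
  subst ha₁ hR₀
  have hμκ : 0 < μ * κ := by positivity
  have hden : 0 < (δ + α₁ + μ) * (μ * κ * d + ρ * Λ) := by positivity
  have hblock : (δ + α₁ + μ) * (d + ρ * Λ / (μ * κ)) < β * Λ / (μ * κ) * η := by
    have h := (one_lt_div hden).mp hgt
    rw [div_mul_eq_mul_div, lt_div_iff₀ hμκ]
    field_simp
    linarith
  obtain ⟨χ, hχ, hroot⟩ := exists_pos_add_mul_add_eq_of_mul_lt hblock
  exact ⟨χ, hχ, by rw [det_smul_one_sub_J₀, hroot, sub_self, mul_zero]⟩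

/-- if R₀ > 1, then J₀ has a positive real eigenvalue,
so the disease-free equilibrium is linearly unstable. -/
theorem J0_has_positive_eigenvalue_of_R0_gt_one
    (Λ β κ ω μ δ ε η d ρ α₁ α₂ : ℝ)
    (hΛ : 0 < Λ) (hβ : 0 < β) (hκ : 0 < κ) (hω : 0 < ω) (hμ : 0 < μ)
    (hδ : 0 < δ) (hε : 0 < ε) (hη : 0 < η) (hd : 0 < d) (hρ : 0 < ρ)
    (hα₁ : 0 ≤ α₁) (hα₂ : 0 ≤ α₂)
    (a₁ R₀ : ℝ) (ha₁ : a₁ = δ + α₁ + μ)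
    (hR₀ : R₀ = β * Λ * η / (a₁ * (μ * κ * d + ρ * Λ)))
    (hgt : 1 < R₀) :
    ∃ χ : ℝ, 0 < χ ∧
      (χ • (1 : Matrix (Fin 5) (Fin 5) ℝ) - J₀ Λ β κ ω μ δ ε η d ρ α₁ α₂).det = 0 :=
  J0_has_positive_eigenvalue_of_R0_gt_one_general Λ β κ ω μ δ ε η d ρ α₁ α₂ hΛ hκ hμ hδ hd hρ hα₁ a₁
    R₀ ha₁ hR₀ hgt
end

section
/- Assume βη > ρa₁ and set λ* = β(R₀ − 1)a₁a₂a₃(ρΛ + μκd) / (Λ(βη − ρa₁)a₂a₃ + κβd(a₁a₂a₃ − δεω)). Then the denominator Λ(βη − ρa₁)a₂a₃ + κβd(a₁a₂a₃ − δεω) is strictly positive, and λ* > 0 if and only if R₀ > 1. -/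
/-! λ* is a positive multiple of R₀ − 1 divided by the denominator, so everything reduces to the
positivity of that denominator: its first summand is positive because βη > ρa₁, its second because
a₁ > δ, a₂ > ε and a₃ > ω force a₁a₂a₃ > δεω. -/

theorem mul_mul_lt_mul_mul {R : Type*} [Semiring R] [PartialOrder R] [IsStrictOrderedRing R]
    {x y z a b c : R} (hx : 0 ≤ x) (hy : 0 ≤ y) (hz : 0 ≤ z)
    (hxa : x < a) (hyb : y < b) (hzc : z < c) : x * y * z < a * b * c :=
  mul_lt_mul'' (mul_lt_mul'' hxa hyb hx hy) hzc (mul_nonneg hx hy) hz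

theorem lambda_star_pos_iff_R0_gt_one_general
    (Λ β κ ω μ δ ε η d ρ α₁ α₂ : ℝ)
    (hΛ : 0 < Λ) (hβ : 0 < β) (hκ : 0 < κ) (hω : 0 < ω) (hμ : 0 < μ)
    (hδ : 0 < δ) (hε : 0 < ε) (hd : 0 < d) (hρ : 0 < ρ)
    (hα₁ : 0 ≤ α₁) (hα₂ : 0 ≤ α₂)
    (a₁ a₂ a₃ R₀ lamStar : ℝ)
    (ha₁ : a₁ = δ + α₁ + μ) (ha₂ : a₂ = ε + α₂ + μ) (ha₃ : a₃ = ω + μ)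
    (hfeas : β * η > ρ * a₁)
    (hlam : lamStar = β * (R₀ - 1) * a₁ * a₂ * a₃ * (ρ * Λ + μ * κ * d) /
      (Λ * (β * η - ρ * a₁) * a₂ * a₃ + κ * β * d * (a₁ * a₂ * a₃ - δ * ε * ω))) :
    0 < Λ * (β * η - ρ * a₁) * a₂ * a₃ + κ * β * d * (a₁ * a₂ * a₃ - δ * ε * ω)
      ∧ (0 < lamStar ↔ 1 < R₀) := by
  have hδa₁ : δ < a₁ := by linarith
  have hεa₂ : ε < a₂ := by linarith
  have hωa₃ : ω < a₃ := by linarith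
  have ha₁pos : 0 < a₁ := hδ.trans hδa₁
  have ha₂pos : 0 < a₂ := hε.trans hεa₂
  have ha₃pos : 0 < a₃ := hω.trans hωa₃
  have hfeas' : 0 < β * η - ρ * a₁ := sub_pos.mpr hfeas
  have hprod : 0 < a₁ * a₂ * a₃ - δ * ε * ω :=
    sub_pos.mpr (mul_mul_lt_mul_mul hδ.le hε.le hω.le hδa₁ hεa₂ hωa₃)
  have hden : 0 < Λ * (β * η - ρ * a₁) * a₂ * a₃ + κ * β * d * (a₁ * a₂ * a₃ - δ * ε * ω) := by
    positivity
  refine ⟨hden, ?_⟩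
  have hcoeff : 0 < β * a₁ * a₂ * a₃ * (ρ * Λ + μ * κ * d) := by positivity
  rw [hlam, show β * (R₀ - 1) * a₁ * a₂ * a₃ * (ρ * Λ + μ * κ * d)
      = β * a₁ * a₂ * a₃ * (ρ * Λ + μ * κ * d) * (R₀ - 1) by ring,
    div_pos_iff_of_pos_right hden, mul_pos_iff_of_pos_left hcoeff, sub_pos]

/-- positivity of the denominator of λ* and the sign of λ*. -/
theorem lambda_star_pos_iff_R0_gt_one
    (Λ β κ ω μ δ ε η d ρ α₁ α₂ : ℝ)
    (hΛ : 0 < Λ) (hβ : 0 < β) (hκ : 0 < κ) (hω : 0 < ω) (hμ : 0 < μ)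
    (hδ : 0 < δ) (hε : 0 < ε) (hη : 0 < η) (hd : 0 < d) (hρ : 0 < ρ)
    (hα₁ : 0 ≤ α₁) (hα₂ : 0 ≤ α₂)
    (a₁ a₂ a₃ R₀ lamStar : ℝ)
    (ha₁ : a₁ = δ + α₁ + μ) (ha₂ : a₂ = ε + α₂ + μ) (ha₃ : a₃ = ω + μ)
    (hR₀ : R₀ = β * Λ * η / (a₁ * (μ * κ * d + ρ * Λ)))
    (hfeas : β * η > ρ * a₁)
    (hlam : lamStar = β * (R₀ - 1) * a₁ * a₂ * a₃ * (ρ * Λ + μ * κ * d) /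
      (Λ * (β * η - ρ * a₁) * a₂ * a₃ + κ * β * d * (a₁ * a₂ * a₃ - δ * ε * ω))) :
    0 < Λ * (β * η - ρ * a₁) * a₂ * a₃ + κ * β * d * (a₁ * a₂ * a₃ - δ * ε * ω)
      ∧ (0 < lamStar ↔ 1 < R₀) :=
  lambda_star_pos_iff_R0_gt_one_general Λ β κ ω μ δ ε η d ρ α₁ α₂ hΛ hβ hκ hω hμ hδ hε hd hρ hα₁ hα₂
    a₁ a₂ a₃ R₀ lamStar ha₁ ha₂ ha₃ hfeas hlam
end

section
/- Assume βη > ρa₁ and R₀ > 1, and set λ* = β(R₀ − 1)a₁a₂a₃(ρΛ + μκd) / (Λ(βη − ρa₁)a₂a₃ + κβd(a₁a₂a₃ − δεω)) and D = a₁a₂a₃(λ* + μ) − δεωλ*. Then D > 0. -/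
/-!
Writing `p = a₁a₂a₃` and `c = δεω`, one has `D = (p - c) λ* + p μ`. Each of `δ, ε, ω` is at most the
corresponding `aᵢ`, so `c ≤ p`; and `λ* ≥ 0`, since its numerator is nonnegative when `R₀ ≥ 1` and its
denominator is nonnegative when `βη > ρ a₁` and `c ≤ p`. Hence `D ≥ p μ > 0`.
-/

lemma mul_add_sub_mul_pos {R : Type*} [CommRing R] [LinearOrder R] [IsStrictOrderedRing R]
    {p c x μ : R} (hcp : c ≤ p) (hp : 0 < p) (hμ : 0 < μ) (hx : 0 ≤ x) :
    0 < p * (x + μ) - c * x := by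
  have hpcx : 0 ≤ (p - c) * x := mul_nonneg (sub_nonneg.mpr hcp) hx
  calc 0 < p * μ := mul_pos hp hμ
    _ ≤ (p - c) * x + p * μ := le_add_of_nonneg_left hpcx
    _ = p * (x + μ) - c * x := by ring

theorem D_pos_general
    (Λ β κ ω μ δ ε η d ρ α₁ α₂ : ℝ)
    (hΛ : 0 < Λ) (hβ : 0 < β) (hκ : 0 < κ) (hω : 0 < ω) (hμ : 0 < μ)
    (hδ : 0 < δ) (hε : 0 < ε) (hd : 0 < d) (hρ : 0 < ρ)
    (hα₁ : 0 ≤ α₁) (hα₂ : 0 ≤ α₂)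
    (a₁ a₂ a₃ R₀ lamStar D : ℝ)
    (ha₁ : a₁ = δ + α₁ + μ) (ha₂ : a₂ = ε + α₂ + μ) (ha₃ : a₃ = ω + μ)
    (hfeas : β * η > ρ * a₁) (hgt : 1 < R₀)
    (hlam : lamStar = β * (R₀ - 1) * a₁ * a₂ * a₃ * (ρ * Λ + μ * κ * d) /
      (Λ * (β * η - ρ * a₁) * a₂ * a₃ + κ * β * d * (a₁ * a₂ * a₃ - δ * ε * ω)))
    (hD : D = a₁ * a₂ * a₃ * (lamStar + μ) - δ * ε * ω * lamStar) :
    0 < D := by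
  have hδa₁ : δ ≤ a₁ := by linarith
  have hεa₂ : ε ≤ a₂ := by linarith
  have hωa₃ : ω ≤ a₃ := by linarith
  have ha₁_pos : 0 < a₁ := hδ.trans_le hδa₁
  have ha₂_pos : 0 < a₂ := hε.trans_le hεa₂
  have ha₃_pos : 0 < a₃ := hω.trans_le hωa₃
  have hp : 0 < a₁ * a₂ * a₃ := by positivity
  have hcp : δ * ε * ω ≤ a₁ * a₂ * a₃ := by gcongr
  have hlam_nonneg : 0 ≤ lamStar := by
    have hR : 0 ≤ R₀ - 1 := by linarith
    have hfeas' : 0 ≤ β * η - ρ * a₁ := by linarith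
    have hcp' : 0 ≤ a₁ * a₂ * a₃ - δ * ε * ω := by linarith
    rw [hlam]
    positivity
  exact hD ▸ mul_add_sub_mul_pos hcp hp hμ hlam_nonneg

/-- positivity of D = a₁a₂a₃(λ* + μ) − δεωλ*. -/
theorem D_pos
    (Λ β κ ω μ δ ε η d ρ α₁ α₂ : ℝ)
    (hΛ : 0 < Λ) (hβ : 0 < β) (hκ : 0 < κ) (hω : 0 < ω) (hμ : 0 < μ)
    (hδ : 0 < δ) (hε : 0 < ε) (hη : 0 < η) (hd : 0 < d) (hρ : 0 < ρ)
    (hα₁ : 0 ≤ α₁) (hα₂ : 0 ≤ α₂)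
    (a₁ a₂ a₃ R₀ lamStar D : ℝ)
    (ha₁ : a₁ = δ + α₁ + μ) (ha₂ : a₂ = ε + α₂ + μ) (ha₃ : a₃ = ω + μ)
    (hR₀ : R₀ = β * Λ * η / (a₁ * (μ * κ * d + ρ * Λ)))
    (hfeas : β * η > ρ * a₁) (hgt : 1 < R₀)
    (hlam : lamStar = β * (R₀ - 1) * a₁ * a₂ * a₃ * (ρ * Λ + μ * κ * d) /
      (Λ * (β * η - ρ * a₁) * a₂ * a₃ + κ * β * d * (a₁ * a₂ * a₃ - δ * ε * ω)))
    (hD : D = a₁ * a₂ * a₃ * (lamStar + μ) - δ * ε * ω * lamStar) :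
    0 < D :=
  D_pos_general Λ β κ ω μ δ ε η d ρ α₁ α₂ hΛ hβ hκ hω hμ hδ hε hd hρ hα₁ hα₂ a₁ a₂ a₃ R₀ lamStar D
    ha₁ ha₂ ha₃ hfeas hgt hlam hD
end

section
/- Assume βη > ρa₁ and R₀ > 1, and set λ* = β(R₀ − 1)a₁a₂a₃(ρΛ + μκd) / (Λ(βη − ρa₁)a₂a₃ + κβd(a₁a₂a₃ − δεω)) and D = a₁a₂a₃(λ* + μ) − δεωλ*. Then the point E* = (S*, I*, Q*, R*, B*) with S* = Λa₁a₂a₃/D, I* = Λa₂a₃λ*/D, Q* = Λδa₃λ*/D, R* = Λδελ*/D, B* = (βη − ρa₁)Λa₂a₃λ*/(βDd) has all five components strictly positive and is an equilibrium of the system: at E*, Λ − βB*S*/(κ+B*) + ωR* − μS* = 0, βB*S*/(κ+B*) − a₁I* = 0, δI* − a₂Q* = 0, εQ* − a₃R* = 0, and ηI* − dB* − ρB*S*/(κ+B*) = 0. -/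
/-!
At an equilibrium the force of infection `λ = βB/(κ+B)` is constant, and with `λ` frozen the
S, I, Q, R equations are linear, with the solution `S*, I*, Q*, R*` in terms of `λ` and `D`;
the B equation then forces `B* = (βη - ρa₁) I* / (βd)`. What remains is the consistency
condition `βB* = λ*(κ + B*)`, which is a linear equation in `λ*` whose solution, rewritten
with `R₀`, is exactly the given `λ*`. Positivity comes from `R₀ > 1`, `βη > ρa₁` and
`δεω < a₁a₂a₃`.
-/

namespace SIQRB

variable {Λ β κ ω μ δ ε η d ρ a₁ a₂ a₃ R₀ lam D S I Q R B : ℝ}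

theorem linear_equilibrium (hD : D = a₁ * a₂ * a₃ * (lam + μ) - δ * ε * ω * lam) (hD0 : D ≠ 0)
    (hS : S = Λ * a₁ * a₂ * a₃ / D) (hI : I = Λ * a₂ * a₃ * lam / D)
    (hQ : Q = Λ * δ * a₃ * lam / D) (hR : R = Λ * δ * ε * lam / D) :
    Λ - lam * S + ω * R - μ * S = 0 ∧ lam * S - a₁ * I = 0 ∧
      δ * I - a₂ * Q = 0 ∧ ε * Q - a₃ * R = 0 := by
  subst hS hI hQ hR
  refine ⟨?_, ?_, ?_, ?_⟩ <;> field_simp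
  · linear_combination Λ * hD
  all_goals ring

theorem lam_mul_eq_of_basicReproduction (hden : a₁ * (μ * κ * d + ρ * Λ) ≠ 0)
    (hR₀ : R₀ = β * Λ * η / (a₁ * (μ * κ * d + ρ * Λ)))
    (hW : Λ * (β * η - ρ * a₁) * a₂ * a₃ + κ * β * d * (a₁ * a₂ * a₃ - δ * ε * ω) ≠ 0)
    (hlam : lam = β * (R₀ - 1) * a₁ * a₂ * a₃ * (ρ * Λ + μ * κ * d) /
      (Λ * (β * η - ρ * a₁) * a₂ * a₃ + κ * β * d * (a₁ * a₂ * a₃ - δ * ε * ω))) :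
    lam * (Λ * (β * η - ρ * a₁) * a₂ * a₃ + κ * β * d * (a₁ * a₂ * a₃ - δ * ε * ω)) =
      β * a₂ * a₃ * (Λ * (β * η - ρ * a₁) - a₁ * μ * κ * d) := by
  have hR₀' : R₀ * (a₁ * (μ * κ * d + ρ * Λ)) = β * Λ * η := by
    rw [hR₀, div_mul_cancel₀ _ hden]
  rw [hlam, div_mul_cancel₀ _ hW]
  linear_combination β * a₂ * a₃ * hR₀'

theorem force_of_infection_eq (hβ : β ≠ 0) (hd : d ≠ 0) (hD0 : D ≠ 0)
    (hD : D = a₁ * a₂ * a₃ * (lam + μ) - δ * ε * ω * lam)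
    (hlam : lam * (Λ * (β * η - ρ * a₁) * a₂ * a₃ + κ * β * d * (a₁ * a₂ * a₃ - δ * ε * ω)) =
      β * a₂ * a₃ * (Λ * (β * η - ρ * a₁) - a₁ * μ * κ * d))
    (hB : B = (β * η - ρ * a₁) * Λ * a₂ * a₃ * lam / (β * D * d)) :
    β * B = lam * (κ + B) := by
  have hBd : B * (β * D * d) = (β * η - ρ * a₁) * Λ * a₂ * a₃ * lam := by
    rw [hB, div_mul_cancel₀ _ (by positivity)]
  apply mul_right_cancel₀ (show β * D * d ≠ 0 by positivity)
  rw [hD] at hBd ⊢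
  linear_combination (β - lam) * hBd - lam * hlam

theorem incidence_eq (hβ : β ≠ 0) (hκB : κ + B ≠ 0) (h : β * B = lam * (κ + B)) :
    B * S / (κ + B) = lam * S / β := by
  field_simp
  linear_combination S * h

end SIQRB

open SIQRB in
theorem endemic_equilibrium_exists_general
    (Λ β κ ω μ δ ε η d ρ α₁ α₂ : ℝ)
    (hΛ : 0 < Λ) (hβ : 0 < β) (hκ : 0 < κ) (hω : 0 < ω) (hμ : 0 < μ)
    (hδ : 0 < δ) (hε : 0 < ε) (hd : 0 < d) (hρ : 0 < ρ)
    (hα₁ : 0 ≤ α₁) (hα₂ : 0 ≤ α₂)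
    (a₁ a₂ a₃ R₀ lamStar D Sstar Istar Qstar Rstar Bstar : ℝ)
    (ha₁ : a₁ = δ + α₁ + μ) (ha₂ : a₂ = ε + α₂ + μ) (ha₃ : a₃ = ω + μ)
    (hR₀ : R₀ = β * Λ * η / (a₁ * (μ * κ * d + ρ * Λ)))
    (hfeas : β * η > ρ * a₁) (hgt : 1 < R₀)
    (hlam : lamStar = β * (R₀ - 1) * a₁ * a₂ * a₃ * (ρ * Λ + μ * κ * d) /
      (Λ * (β * η - ρ * a₁) * a₂ * a₃ + κ * β * d * (a₁ * a₂ * a₃ - δ * ε * ω)))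
    (hD : D = a₁ * a₂ * a₃ * (lamStar + μ) - δ * ε * ω * lamStar)
    (hSs : Sstar = Λ * a₁ * a₂ * a₃ / D)
    (hIs : Istar = Λ * a₂ * a₃ * lamStar / D)
    (hQs : Qstar = Λ * δ * a₃ * lamStar / D)
    (hRs : Rstar = Λ * δ * ε * lamStar / D)
    (hBs : Bstar = (β * η - ρ * a₁) * Λ * a₂ * a₃ * lamStar / (β * D * d)) :
    (0 < Sstar ∧ 0 < Istar ∧ 0 < Qstar ∧ 0 < Rstar ∧ 0 < Bstar) ∧
    Λ - β * Bstar * Sstar / (κ + Bstar) + ω * Rstar - μ * Sstar = 0 ∧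
    β * Bstar * Sstar / (κ + Bstar) - a₁ * Istar = 0 ∧
    δ * Istar - a₂ * Qstar = 0 ∧
    ε * Qstar - a₃ * Rstar = 0 ∧
    η * Istar - d * Bstar - ρ * Bstar * Sstar / (κ + Bstar) = 0 := by
  have ha₁_pos : 0 < a₁ := by linarith
  have ha₂_pos : 0 < a₂ := by linarith
  have ha₃_pos : 0 < a₃ := by linarith
  have hX : 0 < β * η - ρ * a₁ := by linarith
  have hP : 0 < a₁ * a₂ * a₃ - δ * ε * ω := by
    have : δ * ε * ω < a₁ * a₂ * a₃ :=
      mul_lt_mul'' (mul_lt_mul'' (by linarith) (by linarith) hδ.le hε.le) (by linarith)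
        (by positivity) hω.le
    linarith
  have hR₀_sub : 0 < R₀ - 1 := by linarith
  have hlam_pos : 0 < lamStar := by rw [hlam]; positivity
  have hD_pos : 0 < D := by
    rw [show D = a₁ * a₂ * a₃ * μ + (a₁ * a₂ * a₃ - δ * ε * ω) * lamStar by rw [hD]; ring]
    positivity
  obtain ⟨eS, eI, eQ, eR⟩ := linear_equilibrium hD hD_pos.ne' hSs hIs hQs hRs
  have hforce : β * Bstar = lamStar * (κ + Bstar) :=
    force_of_infection_eq hβ.ne' hd.ne' hD_pos.ne' hD
      (lam_mul_eq_of_basicReproduction (by positivity) hR₀ (by positivity) hlam) hBs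
  have hB_pos : 0 < Bstar := by rw [hBs]; positivity
  have hinc := incidence_eq (S := Sstar) hβ.ne' (by positivity) hforce
  have hBI : d * Bstar = (β * η - ρ * a₁) * Istar / β := by
    rw [hBs, hIs]; field_simp
  refine ⟨⟨by rw [hSs]; positivity, by rw [hIs]; positivity, by rw [hQs]; positivity,
    by rw [hRs]; positivity, hB_pos⟩, ?_, ?_, eQ, eR, ?_⟩
  · rw [mul_assoc, mul_div_assoc, hinc, mul_div_cancel₀ _ hβ.ne']
    exact eS
  · rw [mul_assoc, mul_div_assoc, hinc, mul_div_cancel₀ _ hβ.ne']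
    exact eI
  · rw [mul_assoc, mul_div_assoc, hinc, hBI]
    field_simp
    linear_combination -ρ * eI

/-- the endemic point E* has strictly positive components and is an
equilibrium of the SIQRB system. -/
theorem endemic_equilibrium_exists
    (Λ β κ ω μ δ ε η d ρ α₁ α₂ : ℝ)
    (hΛ : 0 < Λ) (hβ : 0 < β) (hκ : 0 < κ) (hω : 0 < ω) (hμ : 0 < μ)
    (hδ : 0 < δ) (hε : 0 < ε) (hη : 0 < η) (hd : 0 < d) (hρ : 0 < ρ)
    (hα₁ : 0 ≤ α₁) (hα₂ : 0 ≤ α₂)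
    (a₁ a₂ a₃ R₀ lamStar D Sstar Istar Qstar Rstar Bstar : ℝ)
    (ha₁ : a₁ = δ + α₁ + μ) (ha₂ : a₂ = ε + α₂ + μ) (ha₃ : a₃ = ω + μ)
    (hR₀ : R₀ = β * Λ * η / (a₁ * (μ * κ * d + ρ * Λ)))
    (hfeas : β * η > ρ * a₁) (hgt : 1 < R₀)
    (hlam : lamStar = β * (R₀ - 1) * a₁ * a₂ * a₃ * (ρ * Λ + μ * κ * d) /
      (Λ * (β * η - ρ * a₁) * a₂ * a₃ + κ * β * d * (a₁ * a₂ * a₃ - δ * ε * ω)))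
    (hD : D = a₁ * a₂ * a₃ * (lamStar + μ) - δ * ε * ω * lamStar)
    (hSs : Sstar = Λ * a₁ * a₂ * a₃ / D)
    (hIs : Istar = Λ * a₂ * a₃ * lamStar / D)
    (hQs : Qstar = Λ * δ * a₃ * lamStar / D)
    (hRs : Rstar = Λ * δ * ε * lamStar / D)
    (hBs : Bstar = (β * η - ρ * a₁) * Λ * a₂ * a₃ * lamStar / (β * D * d)) :
    (0 < Sstar ∧ 0 < Istar ∧ 0 < Qstar ∧ 0 < Rstar ∧ 0 < Bstar) ∧
    Λ - β * Bstar * Sstar / (κ + Bstar) + ω * Rstar - μ * Sstar = 0 ∧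
    β * Bstar * Sstar / (κ + Bstar) - a₁ * Istar = 0 ∧
    δ * Istar - a₂ * Qstar = 0 ∧
    ε * Qstar - a₃ * Rstar = 0 ∧
    η * Istar - d * Bstar - ρ * Bstar * Sstar / (κ + Bstar) = 0 :=
  endemic_equilibrium_exists_general Λ β κ ω μ δ ε η d ρ α₁ α₂ hΛ hβ hκ hω hμ hδ hε hd hρ hα₁ hα₂ a₁
    a₂ a₃ R₀ lamStar D Sstar Istar Qstar Rstar Bstar ha₁ ha₂ ha₃ hR₀ hfeas hgt hlam hD hSs hIs hQs
    hRs hBs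
end

section
/- Assume βη > ρa₁ and R₀ > 1. If (S, I, Q, R, B) is any equilibrium of the system with S ≥ 0, I ≥ 0, Q ≥ 0, R ≥ 0 and B > 0, then (S, I, Q, R, B) equals the endemic equilibrium E* = (Λa₁a₂a₃/D, Λa₂a₃λ*/D, Λδa₃λ*/D, Λδελ*/D, (βη − ρa₁)Λa₂a₃λ*/(βDd)), where λ* = β(R₀ − 1)a₁a₂a₃(ρΛ + μκd) / (Λ(βη − ρa₁)a₂a₃ + κβd(a₁a₂a₃ − δεω)) and D = a₁a₂a₃(λ* + μ) − δεωλ*. -/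
/-!
Put `λ = βB/(κ+B)`, the force of infection. For fixed `λ` the equations for `S, I, Q, R` are
linear: `λS = a₁I`, `a₂Q = δI`, `a₃R = εQ` and `S·D(λ) = Λa₁a₂a₃` with
`D(λ) = a₁a₂a₃(λ+μ) − δεωλ`. The `B`-equation together with `λ(κ+B) = βB` gives
`S(βη − ρa₁)(β − λ) = a₁βdκ`. Eliminating `S` leaves an equation that is linear in `λ`, with
leading coefficient `Λ(βη − ρa₁)a₂a₃ + κβd(a₁a₂a₃ − δεω) > 0`, whose root is `λ*`; the state is
then read off from `λ = λ*`.
-/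

namespace SIQRB

variable {F : Type*} [Field F]

theorem susceptible_mul_denom_eq {Λ ω μ δ ε a₁ a₂ a₃ lam S I Q R : F}
    (hS : Λ + ω * R - μ * S = lam * S) (hI : lam * S = a₁ * I) (hQ : a₂ * Q = δ * I)
    (hR : a₃ * R = ε * Q) :
    S * (a₁ * a₂ * a₃ * (lam + μ) - δ * ε * ω * lam) = Λ * a₁ * a₂ * a₃ := by
  linear_combination (-(a₁ * a₂ * a₃)) * hS + ω * a₁ * a₂ * hR + ω * ε * a₁ * hQ
    - ω * ε * δ * hI

theorem force_mul_susceptible_mul_margin_eq {β η d ρ a₁ lam S I B : F}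
    (hB : β * (η * I - d * B) = ρ * (lam * S)) (hI : lam * S = a₁ * I) :
    lam * S * (β * η - ρ * a₁) = a₁ * β * d * B := by
  linear_combination a₁ * hB + β * η * hI

theorem susceptible_mul_margin_mul_sub_force_eq {β κ d ρ η a₁ lam S B : F} (hlam : lam ≠ 0)
    (hforce : lam * (κ + B) = β * B) (hbal : lam * S * (β * η - ρ * a₁) = a₁ * β * d * B) :
    S * (β * η - ρ * a₁) * (β - lam) = a₁ * β * d * κ := by
  apply mul_left_cancel₀ hlam
  linear_combination (β - lam) * hbal - a₁ * β * d * hforce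

theorem force_mul_coeff_eq {Λ β κ ω μ δ ε η d ρ a₁ a₂ a₃ lam S : F} (ha₁ : a₁ ≠ 0)
    (hSD : S * (a₁ * a₂ * a₃ * (lam + μ) - δ * ε * ω * lam) = Λ * a₁ * a₂ * a₃)
    (hmargin : S * (β * η - ρ * a₁) * (β - lam) = a₁ * β * d * κ) :
    lam * (Λ * (β * η - ρ * a₁) * a₂ * a₃ + κ * β * d * (a₁ * a₂ * a₃ - δ * ε * ω)) =
      β * a₂ * a₃ * (β * Λ * η - a₁ * (μ * κ * d + ρ * Λ)) := by
  apply mul_left_cancel₀ ha₁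
  linear_combination (β * η - ρ * a₁) * (β - lam) * hSD
    - (a₁ * a₂ * a₃ * (lam + μ) - δ * ε * ω * lam) * hmargin

theorem lamStar_mul_coeff_eq {Λ β κ ω μ δ ε η d ρ a₁ a₂ a₃ R₀ lamStar : F}
    (hden : a₁ * (μ * κ * d + ρ * Λ) ≠ 0)
    (hcoeff : Λ * (β * η - ρ * a₁) * a₂ * a₃ + κ * β * d * (a₁ * a₂ * a₃ - δ * ε * ω) ≠ 0)
    (hR₀ : R₀ = β * Λ * η / (a₁ * (μ * κ * d + ρ * Λ)))
    (hlam : lamStar = β * (R₀ - 1) * a₁ * a₂ * a₃ * (ρ * Λ + μ * κ * d) /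
      (Λ * (β * η - ρ * a₁) * a₂ * a₃ + κ * β * d * (a₁ * a₂ * a₃ - δ * ε * ω))) :
    lamStar * (Λ * (β * η - ρ * a₁) * a₂ * a₃ + κ * β * d * (a₁ * a₂ * a₃ - δ * ε * ω)) =
      β * a₂ * a₃ * (β * Λ * η - a₁ * (μ * κ * d + ρ * Λ)) := by
  have hR₀' :
      (R₀ - 1) * (a₁ * (μ * κ * d + ρ * Λ)) = β * Λ * η - a₁ * (μ * κ * d + ρ * Λ) := by
    rw [hR₀, sub_mul, div_mul_cancel₀ _ hden, one_mul]
  rw [hlam, div_mul_cancel₀ _ hcoeff]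
  linear_combination β * a₂ * a₃ * hR₀'

theorem state_eq_of_force {Λ β δ ε η d ρ a₁ a₂ a₃ lam D S I Q R B : F}
    (hD : D ≠ 0) (ha₁ : a₁ ≠ 0) (ha₂ : a₂ ≠ 0) (ha₃ : a₃ ≠ 0) (hβ : β ≠ 0) (hd : d ≠ 0)
    (hSD : S * D = Λ * a₁ * a₂ * a₃) (hI : lam * S = a₁ * I) (hQ : a₂ * Q = δ * I)
    (hR : a₃ * R = ε * Q) (hbal : lam * S * (β * η - ρ * a₁) = a₁ * β * d * B) :
    S = Λ * a₁ * a₂ * a₃ / D ∧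
    I = Λ * a₂ * a₃ * lam / D ∧
    Q = Λ * δ * a₃ * lam / D ∧
    R = Λ * δ * ε * lam / D ∧
    B = (β * η - ρ * a₁) * Λ * a₂ * a₃ * lam / (β * D * d) := by
  have hID : I * D = Λ * a₂ * a₃ * lam := by
    apply mul_left_cancel₀ ha₁
    linear_combination lam * hSD - D * hI
  have hQD : Q * D = Λ * δ * a₃ * lam := by
    apply mul_left_cancel₀ ha₂
    linear_combination D * hQ + δ * hID
  have hRD : R * D = Λ * δ * ε * lam := by
    apply mul_left_cancel₀ ha₃
    linear_combination D * hR + ε * hQD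
  refine ⟨(eq_div_iff hD).2 hSD, (eq_div_iff hD).2 hID, (eq_div_iff hD).2 hQD,
    (eq_div_iff hD).2 hRD, (eq_div_iff (by simp [hβ, hD, hd])).2 ?_⟩
  apply mul_left_cancel₀ ha₁
  linear_combination lam * (β * η - ρ * a₁) * hSD - D * hbal

end SIQRB

open SIQRB

theorem endemic_equilibrium_unique_general
    (Λ β κ ω μ δ ε η d ρ α₁ α₂ : ℝ)
    (hΛ : 0 < Λ) (hβ : 0 < β) (hκ : 0 < κ) (hω : 0 < ω) (hμ : 0 < μ)
    (hδ : 0 < δ) (hε : 0 < ε) (hd : 0 < d) (hρ : 0 < ρ)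
    (hα₁ : 0 ≤ α₁) (hα₂ : 0 ≤ α₂)
    (a₁ a₂ a₃ R₀ lamStar D : ℝ)
    (ha₁ : a₁ = δ + α₁ + μ) (ha₂ : a₂ = ε + α₂ + μ) (ha₃ : a₃ = ω + μ)
    (hR₀ : R₀ = β * Λ * η / (a₁ * (μ * κ * d + ρ * Λ)))
    (hfeas : β * η > ρ * a₁)
    (hlam : lamStar = β * (R₀ - 1) * a₁ * a₂ * a₃ * (ρ * Λ + μ * κ * d) /
      (Λ * (β * η - ρ * a₁) * a₂ * a₃ + κ * β * d * (a₁ * a₂ * a₃ - δ * ε * ω)))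
    (hD : D = a₁ * a₂ * a₃ * (lamStar + μ) - δ * ε * ω * lamStar)
    (S I Q R B : ℝ)
    (hBpos : 0 < B)
    (he1 : Λ - β * B * S / (κ + B) + ω * R - μ * S = 0)
    (he2 : β * B * S / (κ + B) - (δ + α₁ + μ) * I = 0)
    (he3 : δ * I - (ε + α₂ + μ) * Q = 0)
    (he4 : ε * Q - (ω + μ) * R = 0)
    (he5 : η * I - d * B - ρ * B * S / (κ + B) = 0) :
    S = Λ * a₁ * a₂ * a₃ / D ∧
    I = Λ * a₂ * a₃ * lamStar / D ∧
    Q = Λ * δ * a₃ * lamStar / D ∧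
    R = Λ * δ * ε * lamStar / D ∧
    B = (β * η - ρ * a₁) * Λ * a₂ * a₃ * lamStar / (β * D * d) := by
  have hδa₁ : δ < a₁ := by rw [ha₁]; linarith
  have hεa₂ : ε < a₂ := by rw [ha₂]; linarith
  have hωa₃ : ω < a₃ := by rw [ha₃]; linarith
  have ha₁pos : 0 < a₁ := by linarith
  have ha₂pos : 0 < a₂ := by linarith
  have ha₃pos : 0 < a₃ := by linarith
  have hκB : 0 < κ + B := by linarith
  set lam := β * B / (κ + B)
  have hinc : β * B * S / (κ + B) = lam * S := mul_div_right_comm _ _ _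
  have hforce : lam * (κ + B) = β * B := div_mul_cancel₀ _ hκB.ne'
  have hI : lam * S = a₁ * I := by rw [ha₁]; linarith
  have hQ : a₂ * Q = δ * I := by rw [ha₂]; linarith
  have hR : a₃ * R = ε * Q := by rw [ha₃]; linarith
  have hbal : lam * S * (β * η - ρ * a₁) = a₁ * β * d * B :=
    force_mul_susceptible_mul_margin_eq (by linear_combination β * he5 + ρ * hinc) hI
  have hSD : S * (a₁ * a₂ * a₃ * (lam + μ) - δ * ε * ω * lam) = Λ * a₁ * a₂ * a₃ :=
    susceptible_mul_denom_eq (by linarith) hI hQ hR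
  have hcoeff :
      0 < Λ * (β * η - ρ * a₁) * a₂ * a₃ + κ * β * d * (a₁ * a₂ * a₃ - δ * ε * ω) := by
    have : δ * ε * ω < a₁ * a₂ * a₃ :=
      mul_lt_mul'' (mul_lt_mul'' hδa₁ hεa₂ hδ.le hε.le) hωa₃ (by positivity) hω.le
    have : 0 < β * η - ρ * a₁ := by linarith
    positivity
  have hmargin : S * (β * η - ρ * a₁) * (β - lam) = a₁ * β * d * κ :=
    susceptible_mul_margin_mul_sub_force_eq (div_pos (mul_pos hβ hBpos) hκB).ne' hforce hbal
  have hlam_eq : lam = lamStar := mul_right_cancel₀ hcoeff.ne' <|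
    (force_mul_coeff_eq ha₁pos.ne' hSD hmargin).trans
      (lamStar_mul_coeff_eq (by positivity) hcoeff.ne' hR₀ hlam).symm
  rw [hlam_eq, ← hD] at hSD
  have hDne : D ≠ 0 := right_ne_zero_of_mul (a := S) (by rw [hSD]; positivity)
  rw [← hlam_eq]
  exact state_eq_of_force hDne ha₁pos.ne' ha₂pos.ne' ha₃pos.ne' hβ.ne' hd.ne' hSD hI hQ hR hbal

/-- uniqueness of the endemic equilibrium among equilibria with
nonnegative human compartments and a positive bacterial concentration. -/
theorem endemic_equilibrium_unique
    (Λ β κ ω μ δ ε η d ρ α₁ α₂ : ℝ)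
    (hΛ : 0 < Λ) (hβ : 0 < β) (hκ : 0 < κ) (hω : 0 < ω) (hμ : 0 < μ)
    (hδ : 0 < δ) (hε : 0 < ε) (hη : 0 < η) (hd : 0 < d) (hρ : 0 < ρ)
    (hα₁ : 0 ≤ α₁) (hα₂ : 0 ≤ α₂)
    (a₁ a₂ a₃ R₀ lamStar D : ℝ)
    (ha₁ : a₁ = δ + α₁ + μ) (ha₂ : a₂ = ε + α₂ + μ) (ha₃ : a₃ = ω + μ)
    (hR₀ : R₀ = β * Λ * η / (a₁ * (μ * κ * d + ρ * Λ)))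
    (hfeas : β * η > ρ * a₁) (hgt : 1 < R₀)
    (hlam : lamStar = β * (R₀ - 1) * a₁ * a₂ * a₃ * (ρ * Λ + μ * κ * d) /
      (Λ * (β * η - ρ * a₁) * a₂ * a₃ + κ * β * d * (a₁ * a₂ * a₃ - δ * ε * ω)))
    (hD : D = a₁ * a₂ * a₃ * (lamStar + μ) - δ * ε * ω * lamStar)
    (S I Q R B : ℝ)
    (hSnn : 0 ≤ S) (hInn : 0 ≤ I) (hQnn : 0 ≤ Q) (hRnn : 0 ≤ R) (hBpos : 0 < B)
    (he1 : Λ - β * B * S / (κ + B) + ω * R - μ * S = 0)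
    (he2 : β * B * S / (κ + B) - (δ + α₁ + μ) * I = 0)
    (he3 : δ * I - (ε + α₂ + μ) * Q = 0)
    (he4 : ε * Q - (ω + μ) * R = 0)
    (he5 : η * I - d * B - ρ * B * S / (κ + B) = 0) :
    S = Λ * a₁ * a₂ * a₃ / D ∧
    I = Λ * a₂ * a₃ * lamStar / D ∧
    Q = Λ * δ * a₃ * lamStar / D ∧
    R = Λ * δ * ε * lamStar / D ∧
    B = (β * η - ρ * a₁) * Λ * a₂ * a₃ * lamStar / (β * D * d) :=
  endemic_equilibrium_unique_general Λ β κ ω μ δ ε η d ρ α₁ α₂ hΛ hβ hκ hω hμ hδ hε hd hρ hα₁ hα₂ a₁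
    a₂ a₃ R₀ lamStar D ha₁ ha₂ ha₃ hR₀ hfeas hlam hD S I Q R B hBpos he1 he2 he3 he4 he5
end

section
/- Assume βη > ρa₁ and R₀ ≤ 1. Then the system has no equilibrium (S, I, Q, R, B) with S ≥ 0, I ≥ 0, Q ≥ 0, R ≥ 0 and B > 0. -/
/-!
Write `x = BS/(κ+B)`, so that the incidence is `βx` and the bacterial uptake is `ρx`. At an
equilibrium the `I`- and `B`-equations eliminate `x` and give `I(βη - ρa₁) = βdB`, so `I > 0`;
feeding this back into `βx = a₁I` gives `S(βη - ρa₁) = a₁d(κ+B)`. Along the chain `I → Q → R`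
only part of `δI` returns to `S`, so `ωR < δI ≤ a₁I` and the `S`-equation yields `μS < Λ`.
Multiplying by `βη - ρa₁` gives `a₁(μκd + ρΛ) < βηΛ - μa₁dB < βηΛ`, i.e. `R₀ > 1`.
-/

namespace SIQRB

section Algebra

variable {K : Type*} [Field K] {β η ρ a₁ d κ x I B S : K}

theorem infected_mul_eq (hinc : β * x = a₁ * I) (hbac : η * I - d * B - ρ * x = 0) :
    I * (β * η - ρ * a₁) = β * d * B := by
  linear_combination β * hbac + ρ * hinc

theorem susceptible_mul_eq (hβ : β ≠ 0) (hB : B ≠ 0) (hx : x * (κ + B) = B * S)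
    (hinc : β * x = a₁ * I) (hI : I * (β * η - ρ * a₁) = β * d * B) :
    S * (β * η - ρ * a₁) = a₁ * d * (κ + B) := by
  apply mul_left_cancel₀ (mul_ne_zero hβ hB)
  linear_combination -(β * (β * η - ρ * a₁)) * hx + (β * η - ρ * a₁) * (κ + B) * hinc
    + a₁ * (κ + B) * hI

end Algebra

theorem chain_outflow_lt {K : Type*} [Field K] [LinearOrder K] [IsStrictOrderedRing K]
    {ε ω a₂ a₃ y Q R : K} (hε : 0 ≤ ε) (hεa₂ : ε < a₂) (hωa₃ : ω ≤ a₃) (ha₃ : 0 < a₃)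
    (hy : 0 < y) (hQ : y = a₂ * Q) (hR : ε * Q = a₃ * R) : ω * R < y := by
  have hQ_pos : 0 < Q := pos_of_mul_pos_right (hQ ▸ hy) (hε.trans hεa₂.le)
  have hR_nonneg : 0 ≤ R := nonneg_of_mul_nonneg_right (hR ▸ mul_nonneg hε hQ_pos.le) ha₃
  calc ω * R ≤ a₃ * R := mul_le_mul_of_nonneg_right hωa₃ hR_nonneg
    _ = ε * Q := hR.symm
    _ < a₂ * Q := mul_lt_mul_of_pos_right hεa₂ hQ_pos
    _ = y := hQ.symm

end SIQRB

theorem no_endemic_equilibrium_of_R0_le_one_general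
    (Λ β κ ω μ δ ε η d ρ α₁ α₂ : ℝ)
    (hΛ : 0 < Λ) (hβ : 0 < β) (hκ : 0 < κ) (hω : 0 < ω) (hμ : 0 < μ)
    (hδ : 0 < δ) (hε : 0 < ε) (hd : 0 < d) (hρ : 0 < ρ)
    (hα₁ : 0 ≤ α₁) (hα₂ : 0 ≤ α₂)
    (a₁ R₀ : ℝ) (ha₁ : a₁ = δ + α₁ + μ)
    (hR₀ : R₀ = β * Λ * η / (a₁ * (μ * κ * d + ρ * Λ)))
    (hfeas : β * η > ρ * a₁) (hle : R₀ ≤ 1) :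
    ¬ ∃ S I Q R B : ℝ,
      0 ≤ S ∧ 0 ≤ I ∧ 0 ≤ Q ∧ 0 ≤ R ∧ 0 < B ∧
      Λ - β * B * S / (κ + B) + ω * R - μ * S = 0 ∧
      β * B * S / (κ + B) - (δ + α₁ + μ) * I = 0 ∧
      δ * I - (ε + α₂ + μ) * Q = 0 ∧
      ε * Q - (ω + μ) * R = 0 ∧
      η * I - d * B - ρ * B * S / (κ + B) = 0 := by
  rintro ⟨S, I, Q, R, B, -, -, -, -, hB, hS_eq, hI_eq, hQ_eq, hR_eq, hB_eq⟩
  rw [← ha₁] at hI_eq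
  set x := B * S / (κ + B) with hx
  have hx_mul : x * (κ + B) = B * S := div_mul_cancel₀ _ (by positivity)
  have hβx : β * B * S / (κ + B) = β * x := by rw [hx]; ring
  have hρx : ρ * B * S / (κ + B) = ρ * x := by rw [hx]; ring
  rw [hβx] at hS_eq hI_eq
  rw [hρx] at hB_eq
  have hinc : β * x = a₁ * I := by linarith
  have hD : 0 < β * η - ρ * a₁ := sub_pos.mpr hfeas
  have hIB := SIQRB.infected_mul_eq hinc hB_eq
  have hI : 0 < I := pos_of_mul_pos_left (hIB ▸ by positivity) hD.le
  have hRI : ω * R < δ * I :=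
    SIQRB.chain_outflow_lt hε.le (by linarith) (by linarith) (by positivity) (by positivity)
      (sub_eq_zero.mp hQ_eq) (sub_eq_zero.mp hR_eq)
  have ha₁_pos : 0 < a₁ := by rw [ha₁]; positivity
  have hδa₁ : δ * I ≤ a₁ * I := mul_le_mul_of_nonneg_right (by linarith) hI.le
  have hSΛ : μ * S < Λ := by linarith
  have hSD := SIQRB.susceptible_mul_eq hβ.ne' hB.ne' hx_mul hinc hIB
  have hR₀_gt : β * Λ * η > a₁ * (μ * κ * d + ρ * Λ) := by
    nlinarith [mul_lt_mul_of_pos_right hSΛ hD, mul_pos (mul_pos (mul_pos hμ ha₁_pos) hd) hB]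
  rw [hR₀, div_le_one (by positivity)] at hle
  exact hle.not_gt hR₀_gt

/-- if R₀ ≤ 1 (and βη > ρa₁), the SIQRB system has no equilibrium
with nonnegative human compartments and positive bacterial concentration. -/
theorem no_endemic_equilibrium_of_R0_le_one
    (Λ β κ ω μ δ ε η d ρ α₁ α₂ : ℝ)
    (hΛ : 0 < Λ) (hβ : 0 < β) (hκ : 0 < κ) (hω : 0 < ω) (hμ : 0 < μ)
    (hδ : 0 < δ) (hε : 0 < ε) (hη : 0 < η) (hd : 0 < d) (hρ : 0 < ρ)
    (hα₁ : 0 ≤ α₁) (hα₂ : 0 ≤ α₂)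
    (a₁ R₀ : ℝ) (ha₁ : a₁ = δ + α₁ + μ)
    (hR₀ : R₀ = β * Λ * η / (a₁ * (μ * κ * d + ρ * Λ)))
    (hfeas : β * η > ρ * a₁) (hle : R₀ ≤ 1) :
    ¬ ∃ S I Q R B : ℝ,
      0 ≤ S ∧ 0 ≤ I ∧ 0 ≤ Q ∧ 0 ≤ R ∧ 0 < B ∧
      Λ - β * B * S / (κ + B) + ω * R - μ * S = 0 ∧
      β * B * S / (κ + B) - (δ + α₁ + μ) * I = 0 ∧
      δ * I - (ε + α₂ + μ) * Q = 0 ∧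
      ε * Q - (ω + μ) * R = 0 ∧
      η * I - d * B - ρ * B * S / (κ + B) = 0 :=
  no_endemic_equilibrium_of_R0_le_one_general Λ β κ ω μ δ ε η d ρ α₁ α₂ hΛ hβ hκ hω hμ hδ hε hd hρ
    hα₁ hα₂ a₁ R₀ ha₁ hR₀ hfeas hle
end

section
/- The characteristic polynomial of the 5×5 real matrix J₀* factors as det(χI₅ − J₀*) = χ(χ + μ)(χ + a₂)(χ + a₃)(χ + a₁ + (ρΛ + μκd)/(μκ)); in particular 0 is a simple eigenvalue of J₀* and all other eigenvalues of J₀* are strictly negative reals. -/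
/-!
In the characteristic matrix of J₀*, the S, Q and R columns each have a single entry outside
the rows already used, so cofactor expansion splits off X + μ, X + a₂ and X + a₃ and leaves
the 2 × 2 block [[X + a₁, −e], [−η, X + b]] of I and B. Its determinant
X² + (a₁ + b)X + (a₁b − eη) loses its constant term exactly at the threshold β = β*, which leaves the simple root 0 next to the negative
roots −μ, −a₂, −a₃, −(a₁ + b).
-/

open Polynomial

/-- The Jacobian of the SIQRB system at the disease-free equilibrium with the
ingestion rate set to the bifurcation value β* = a₁(ρΛ + μκd)/(Λη). -/
noncomputable def J₀star (Λ κ ω μ δ ε η d ρ α₁ α₂ : ℝ) : Matrix (Fin 5) (Fin 5) ℝ :=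
  Matrix.of
    ![![-μ, 0, 0, ω, -((δ + α₁ + μ) * (ρ * Λ + μ * κ * d) / (η * μ * κ))],
      ![0, -(δ + α₁ + μ), 0, 0, (δ + α₁ + μ) * (ρ * Λ + μ * κ * d) / (η * μ * κ)],
      ![0, δ, -(ε + α₂ + μ), 0, 0],
      ![0, 0, ε, -(ω + μ), 0],
      ![0, η, 0, 0, -((ρ * Λ + μ * κ * d) / (μ * κ))]]

section

variable {R : Type*} [CommRing R]

def siqrbJacobian (m ω δ ε η e b a₁ a₂ a₃ : R) : Matrix (Fin 5) (Fin 5) R :=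
  Matrix.of
    ![![-m, 0, 0, ω, -e],
      ![0, -a₁, 0, 0, e],
      ![0, δ, -a₂, 0, 0],
      ![0, 0, ε, -a₃, 0],
      ![0, η, 0, 0, -b]]

theorem charpoly_siqrbJacobian (m ω δ ε η e b a₁ a₂ a₃ : R) :
    (siqrbJacobian m ω δ ε η e b a₁ a₂ a₃).charpoly =
      (X + C m) * (X + C a₂) * (X + C a₃) * (X ^ 2 + C (a₁ + b) * X + C (a₁ * b - e * η)) := by
  rw [Matrix.charpoly, Matrix.det_succ_column_zero]
  simp [siqrbJacobian, Fin.sum_univ_succ, Matrix.det_succ_column_zero, Matrix.submatrix,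
    Matrix.charmatrix_apply, Fin.succAbove]
  ring

-- With e = βΛ/(μκ) and b = (ρΛ + μκd)/(μκ), the condition `e * η = a₁ * b` says β = β*.
theorem charpoly_siqrbJacobian_of_mul_eq {m ω δ ε η e b a₁ a₂ a₃ : R} (h : e * η = a₁ * b) :
    (siqrbJacobian m ω δ ε η e b a₁ a₂ a₃).charpoly =
      X * (X + C m) * (X + C a₂) * (X + C a₃) * (X + C (a₁ + b)) := by
  rw [charpoly_siqrbJacobian, h, sub_self, C_0, add_zero]
  ring

theorem rootMultiplicity_zero_X_mul [Nontrivial R] {q : R[X]} (hq : q.eval 0 ≠ 0) :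
    rootMultiplicity 0 (X * q) = 1 := by
  have hq₀ : q ≠ 0 := by rintro rfl; exact hq eval_zero
  simpa [mul_comm, rootMultiplicity_eq_zero hq] using
    rootMultiplicity_mul_X_sub_C_pow (a := (0 : R)) (n := 1) hq₀

end

theorem J₀star_eq_siqrbJacobian (Λ κ ω μ δ ε η d ρ α₁ α₂ : ℝ) :
    J₀star Λ κ ω μ δ ε η d ρ α₁ α₂ =
      siqrbJacobian μ ω δ ε η ((δ + α₁ + μ) * (ρ * Λ + μ * κ * d) / (η * μ * κ))
        ((ρ * Λ + μ * κ * d) / (μ * κ)) (δ + α₁ + μ) (ε + α₂ + μ) (ω + μ) :=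
  rfl

theorem im_eq_zero_and_re_neg_of_isRoot_map_X_add_C {c : ℝ} (hc : 0 < c) {z : ℂ}
    (hz : ((X + C c).map (algebraMap ℝ ℂ)).IsRoot z) : z.im = 0 ∧ z.re < 0 := by
  have : z = -c := by simpa [eq_neg_iff_add_eq_zero] using hz
  simp [this, hc]

theorem charpoly_J0star_factors_general
    (Λ κ ω μ δ ε η d ρ α₁ α₂ : ℝ)
    (hΛ : 0 < Λ) (hκ : 0 < κ) (hω : 0 < ω) (hμ : 0 < μ)
    (hδ : 0 < δ) (hε : 0 < ε) (hη : 0 < η) (hd : 0 < d) (hρ : 0 < ρ)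
    (hα₁ : 0 ≤ α₁) (hα₂ : 0 ≤ α₂)
    (a₁ a₂ a₃ : ℝ)
    (ha₁ : a₁ = δ + α₁ + μ) (ha₂ : a₂ = ε + α₂ + μ) (ha₃ : a₃ = ω + μ) :
    (J₀star Λ κ ω μ δ ε η d ρ α₁ α₂).charpoly =
      X * (X + C μ) * (X + C a₂) * (X + C a₃) *
        (X + C (a₁ + (ρ * Λ + μ * κ * d) / (μ * κ))) ∧
    rootMultiplicity 0 (J₀star Λ κ ω μ δ ε η d ρ α₁ α₂).charpoly = 1 ∧
    ∀ χ : ℂ,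
      (((J₀star Λ κ ω μ δ ε η d ρ α₁ α₂).charpoly).map (algebraMap ℝ ℂ)).IsRoot χ →
        χ = 0 ∨ (χ.im = 0 ∧ χ.re < 0) := by
  subst ha₁ ha₂ ha₃
  set b := (ρ * Λ + μ * κ * d) / (μ * κ)
  have hb : 0 < b := by positivity
  have hfactor : (J₀star Λ κ ω μ δ ε η d ρ α₁ α₂).charpoly =
      X * (X + C μ) * (X + C (ε + α₂ + μ)) * (X + C (ω + μ)) * (X + C (δ + α₁ + μ + b)) := by
    rw [J₀star_eq_siqrbJacobian]
    exact charpoly_siqrbJacobian_of_mul_eq (by field_simp)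
  refine ⟨hfactor, ?_, ?_⟩
  · rw [hfactor, mul_assoc, mul_assoc, mul_assoc]
    exact rootMultiplicity_zero_X_mul (by simp only [eval_mul, eval_add, eval_X, eval_C]; positivity)
  · intro χ hχ
    simp only [hfactor, Polynomial.map_mul, root_mul] at hχ
    rcases hχ with (((h | h) | h) | h) | h
    · exact Or.inl (by simpa using h)
    all_goals exact Or.inr (im_eq_zero_and_re_neg_of_isRoot_map_X_add_C (by positivity) h)

/-- the characteristic polynomial of J₀* factors as
χ(χ + μ)(χ + a₂)(χ + a₃)(χ + a₁ + (ρΛ + μκd)/(μκ)); in particular 0 is a simple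
eigenvalue and all other eigenvalues are strictly negative reals. -/
theorem charpoly_J0star_factors
    (Λ β κ ω μ δ ε η d ρ α₁ α₂ : ℝ)
    (hΛ : 0 < Λ) (hβ : 0 < β) (hκ : 0 < κ) (hω : 0 < ω) (hμ : 0 < μ)
    (hδ : 0 < δ) (hε : 0 < ε) (hη : 0 < η) (hd : 0 < d) (hρ : 0 < ρ)
    (hα₁ : 0 ≤ α₁) (hα₂ : 0 ≤ α₂)
    (a₁ a₂ a₃ : ℝ)
    (ha₁ : a₁ = δ + α₁ + μ) (ha₂ : a₂ = ε + α₂ + μ) (ha₃ : a₃ = ω + μ) :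
    (J₀star Λ κ ω μ δ ε η d ρ α₁ α₂).charpoly =
      X * (X + C μ) * (X + C a₂) * (X + C a₃) *
        (X + C (a₁ + (ρ * Λ + μ * κ * d) / (μ * κ))) ∧
    rootMultiplicity 0 (J₀star Λ κ ω μ δ ε η d ρ α₁ α₂).charpoly = 1 ∧
    ∀ χ : ℂ,
      (((J₀star Λ κ ω μ δ ε η d ρ α₁ α₂).charpoly).map (algebraMap ℝ ℂ)).IsRoot χ →
        χ = 0 ∨ (χ.im = 0 ∧ χ.re < 0) :=
  charpoly_J0star_factors_general Λ κ ω μ δ ε η d ρ α₁ α₂ hΛ hκ hω hμ hδ hε hη hd hρ hα₁ hα₂ a₁ a₂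
    a₃ ha₁ ha₂ ha₃
end

section
/- The vector w = ((δεω/(a₂a₃) − a₁)/μ, 1, δ/a₂, δε/(a₂a₃), μκη/(ρΛ + μκd)) ∈ ℝ⁵ satisfies J₀* w = 0; i.e., w is a right eigenvector of J₀* associated with the eigenvalue 0. -/
namespace SIQRB

variable {F : Type*} [Field F]

/-- `J₀*` in terms of the removal rates `a₁, a₂, a₃` and the decay rate `k` of `B`. -/
def reducedJacobian (μ ω δ ε η a₁ a₂ a₃ k : F) : Matrix (Fin 5) (Fin 5) F :=
  Matrix.of
    ![![-μ, 0, 0, ω, -(a₁ * k / η)],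
      ![0, -a₁, 0, 0, a₁ * k / η],
      ![0, δ, -a₂, 0, 0],
      ![0, 0, ε, -a₃, 0],
      ![0, η, 0, 0, -k]]

def nullVector (μ ω δ ε η a₁ a₂ a₃ k : F) : Fin 5 → F :=
  ![(δ * ε * ω / (a₂ * a₃) - a₁) / μ, 1, δ / a₂, δ * ε / (a₂ * a₃), η / k]

theorem reducedJacobian_mulVec_nullVector {μ ω δ ε η a₁ a₂ a₃ k : F}
    (hμ : μ ≠ 0) (hη : η ≠ 0) (ha₂ : a₂ ≠ 0) (ha₃ : a₃ ≠ 0) (hk : k ≠ 0) :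
    (reducedJacobian μ ω δ ε η a₁ a₂ a₃ k).mulVec (nullVector μ ω δ ε η a₁ a₂ a₃ k) = 0 := by
  ext i
  fin_cases i <;>
    simp only [reducedJacobian, nullVector, Matrix.mulVec, dotProduct, Fin.sum_univ_five,
      Matrix.of_apply, Matrix.cons_val', Matrix.cons_val_fin_one, Matrix.cons_val_zero,
      Matrix.cons_val_one, Matrix.cons_val, Fin.isValue, Fin.zero_eta, Fin.mk_one, Fin.reduceFinMk,
      Pi.zero_apply] <;>
    field_simp <;> ring

end SIQRB

open SIQRB in
theorem J0star_right_eigenvector_general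
    (Λ κ ω μ δ ε η d ρ α₁ α₂ : ℝ)
    (hΛ : 0 < Λ) (hκ : 0 < κ) (hω : 0 < ω) (hμ : 0 < μ)
    (hε : 0 < ε) (hη : 0 < η) (hd : 0 < d) (hρ : 0 < ρ)
    (hα₂ : 0 ≤ α₂)
    (a₁ a₂ a₃ : ℝ)
    (ha₁ : a₁ = δ + α₁ + μ) (ha₂ : a₂ = ε + α₂ + μ) (ha₃ : a₃ = ω + μ)
    (w : Fin 5 → ℝ)
    (hw : w = ![(δ * ε * ω / (a₂ * a₃) - a₁) / μ, 1, δ / a₂, δ * ε / (a₂ * a₃),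
      μ * κ * η / (ρ * Λ + μ * κ * d)]) :
    (J₀star Λ κ ω μ δ ε η d ρ α₁ α₂).mulVec w = 0 := by
  set k := (ρ * Λ + μ * κ * d) / (μ * κ)
  have hk : k ≠ 0 := by positivity
  have hJ : J₀star Λ κ ω μ δ ε η d ρ α₁ α₂ = reducedJacobian μ ω δ ε η a₁ a₂ a₃ k := by
    have hB : (δ + α₁ + μ) * (ρ * Λ + μ * κ * d) / (η * μ * κ) = (δ + α₁ + μ) * k / η := by ring
    rw [J₀star, reducedJacobian, hB, ← ha₁, ← ha₂, ← ha₃]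
  have hw' : w = nullVector μ ω δ ε η a₁ a₂ a₃ k := by
    rw [hw, nullVector, div_div_eq_mul_div, mul_comm η]
  rw [hJ, hw']
  exact reducedJacobian_mulVec_nullVector hμ.ne' hη.ne' (by rw [ha₂]; positivity)
    (by rw [ha₃]; positivity) hk

/-- w is a right eigenvector of J₀* associated with eigenvalue 0. -/
theorem J0star_right_eigenvector
    (Λ β κ ω μ δ ε η d ρ α₁ α₂ : ℝ)
    (hΛ : 0 < Λ) (hβ : 0 < β) (hκ : 0 < κ) (hω : 0 < ω) (hμ : 0 < μ)
    (hδ : 0 < δ) (hε : 0 < ε) (hη : 0 < η) (hd : 0 < d) (hρ : 0 < ρ)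
    (hα₁ : 0 ≤ α₁) (hα₂ : 0 ≤ α₂)
    (a₁ a₂ a₃ : ℝ)
    (ha₁ : a₁ = δ + α₁ + μ) (ha₂ : a₂ = ε + α₂ + μ) (ha₃ : a₃ = ω + μ)
    (w : Fin 5 → ℝ)
    (hw : w = ![(δ * ε * ω / (a₂ * a₃) - a₁) / μ, 1, δ / a₂, δ * ε / (a₂ * a₃),
      μ * κ * η / (ρ * Λ + μ * κ * d)]) :
    (J₀star Λ κ ω μ δ ε η d ρ α₁ α₂).mulVec w = 0 :=
  J0star_right_eigenvector_general Λ κ ω μ δ ε η d ρ α₁ α₂ hΛ hκ hω hμ hε hη hd hρ hα₂ a₁ a₂ a₃ ha₁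
    ha₂ ha₃ w hw
end

section
/- Set β* = a₁(ρΛ + μκd)/(Λη) and define the bifurcation coefficient a = (2μ(β*η − ρa₁)/(ρΛ + μκd))·((δεω − a₁a₂a₃)/(a₂a₃μ) − Λη/(ρΛ + μκd)). Then β*η − ρa₁ = a₁μκd/Λ > 0 and a < 0. -/
theorem mul_add_div_mul_mul_sub_mul {a ρ Λ m η : ℝ} (hΛ : Λ ≠ 0) (hη : η ≠ 0) :
    a * (ρ * Λ + m) / (Λ * η) * η - ρ * a = a * m / Λ := by
  field_simp
  ring

theorem mul_mul_lt_mul_mul_of_lt {x y z x' y' z' : ℝ} (hx : 0 ≤ x) (hy : 0 ≤ y) (hz : 0 ≤ z)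
    (hxx' : x < x') (hyy' : y < y') (hzz' : z < z') : x * y * z < x' * y' * z' :=
  mul_lt_mul'' (mul_lt_mul'' hxx' hyy' hx hy) hzz' (mul_nonneg hx hy) hz

theorem bifurcation_coefficient_a_neg_general
    (Λ κ ω μ δ ε η d ρ α₁ α₂ : ℝ)
    (hΛ : 0 < Λ) (hκ : 0 < κ) (hω : 0 < ω) (hμ : 0 < μ)
    (hδ : 0 < δ) (hε : 0 < ε) (hη : 0 < η) (hd : 0 < d) (hρ : 0 < ρ)
    (hα₁ : 0 ≤ α₁) (hα₂ : 0 ≤ α₂)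
    (a₁ a₂ a₃ βstar a : ℝ)
    (ha₁ : a₁ = δ + α₁ + μ) (ha₂ : a₂ = ε + α₂ + μ) (ha₃ : a₃ = ω + μ)
    (hβstar : βstar = a₁ * (ρ * Λ + μ * κ * d) / (Λ * η))
    (ha : a = 2 * μ * (βstar * η - ρ * a₁) / (ρ * Λ + μ * κ * d) *
      ((δ * ε * ω - a₁ * a₂ * a₃) / (a₂ * a₃ * μ) - Λ * η / (ρ * Λ + μ * κ * d))) :
    βstar * η - ρ * a₁ = a₁ * μ * κ * d / Λ ∧
    0 < βstar * η - ρ * a₁ ∧ a < 0 := by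
  have ha₁_pos : 0 < a₁ := by rw [ha₁]; positivity
  have ha₂_pos : 0 < a₂ := by rw [ha₂]; positivity
  have ha₃_pos : 0 < a₃ := by rw [ha₃]; positivity
  have hgap : βstar * η - ρ * a₁ = a₁ * μ * κ * d / Λ := by
    rw [hβstar, mul_add_div_mul_mul_sub_mul hΛ.ne' hη.ne', ← mul_assoc, ← mul_assoc]
  have hgap_pos : 0 < βstar * η - ρ * a₁ := by rw [hgap]; positivity
  have hprod : δ * ε * ω < a₁ * a₂ * a₃ := by
    rw [ha₁, ha₂, ha₃]
    exact mul_mul_lt_mul_mul_of_lt hδ.le hε.le hω.le (by linarith) (by linarith) (by linarith)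
  refine ⟨hgap, hgap_pos, ?_⟩
  rw [ha]
  refine mul_neg_of_pos_of_neg (by positivity) (sub_neg_of_lt ?_)
  calc (δ * ε * ω - a₁ * a₂ * a₃) / (a₂ * a₃ * μ) < 0 :=
        div_neg_of_neg_of_pos (sub_neg_of_lt hprod) (by positivity)
    _ < Λ * η / (ρ * Λ + μ * κ * d) := by positivity

/-- the bifurcation coefficient a is negative, and
β*η − ρa₁ = a₁μκd/Λ > 0. -/
theorem bifurcation_coefficient_a_neg
    (Λ β κ ω μ δ ε η d ρ α₁ α₂ : ℝ)
    (hΛ : 0 < Λ) (hβ : 0 < β) (hκ : 0 < κ) (hω : 0 < ω) (hμ : 0 < μ)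
    (hδ : 0 < δ) (hε : 0 < ε) (hη : 0 < η) (hd : 0 < d) (hρ : 0 < ρ)
    (hα₁ : 0 ≤ α₁) (hα₂ : 0 ≤ α₂)
    (a₁ a₂ a₃ βstar a : ℝ)
    (ha₁ : a₁ = δ + α₁ + μ) (ha₂ : a₂ = ε + α₂ + μ) (ha₃ : a₃ = ω + μ)
    (hβstar : βstar = a₁ * (ρ * Λ + μ * κ * d) / (Λ * η))
    (ha : a = 2 * μ * (βstar * η - ρ * a₁) / (ρ * Λ + μ * κ * d) *
      ((δ * ε * ω - a₁ * a₂ * a₃) / (a₂ * a₃ * μ) - Λ * η / (ρ * Λ + μ * κ * d))) :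
    βstar * η - ρ * a₁ = a₁ * μ * κ * d / Λ ∧
    0 < βstar * η - ρ * a₁ ∧ a < 0 :=
  bifurcation_coefficient_a_neg_general Λ κ ω μ δ ε η d ρ α₁ α₂ hΛ hκ hω hμ hδ hε hη hd hρ hα₁ hα₂
    a₁ a₂ a₃ βstar a ha₁ ha₂ ha₃ hβstar ha
end
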